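/- arXiv:2111.11308 — 15 statements merged into one kernel-verified Lean document; each statement's English description precedes it below -/
import Mathlib

section
/- For every a > 0 and b ∈ ℝ, the function f : ℝ → ℝ defined by f(y) = a − y·tanh((y − b)/a) has exactly two zeros y⁻ < y⁺; moreover f(y) > 0 for every y ∈ (y⁻, y⁺) and f(y) < 0 for every y with y < y⁻ or y > y⁺. -/
/-!
Multiplying by `cosh ((y - b) / a) > 0` turns `a - y tanh ((y - b) / a)` into
`F y = a cosh ((y - b) / a) - y sinh ((y - b) / a)`, whose derivative `-(y / a) cosh ((y - b) / a)`
has the sign of `-y`. So `F` increases up to its positive value at `0` and decreases afterwards;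
since `F` is negative far out on both sides, it has one zero on each side of `0`.
-/

open Real Set

def PosBetweenTwoZeros (f : ℝ → ℝ) (ym yp : ℝ) : Prop :=
  ym < yp ∧ f ym = 0 ∧ f yp = 0 ∧ (∀ y, f y = 0 → y = ym ∨ y = yp) ∧
    (∀ y, ym < y → y < yp → 0 < f y) ∧ (∀ y, y < ym ∨ yp < y → f y < 0)

theorem PosBetweenTwoZeros.pos_mul {f w : ℝ → ℝ} {ym yp : ℝ} (hf : PosBetweenTwoZeros f ym yp)
    (hw : ∀ y, 0 < w y) : PosBetweenTwoZeros (fun y => w y * f y) ym yp := by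
  obtain ⟨hlt, hm, hp, hzero, hpos, hneg⟩ := hf
  refine ⟨hlt, by simp [hm], by simp [hp], fun y hy => hzero y ?_,
    fun y h₁ h₂ => mul_pos (hw y) (hpos y h₁ h₂),
    fun y hy => mul_neg_of_pos_of_neg (hw y) (hneg y hy)⟩
  exact (mul_eq_zero.1 hy).resolve_left (hw y).ne'

theorem exists_posBetweenTwoZeros_of_strictMonoOn_strictAntiOn {f : ℝ → ℝ} {l c r : ℝ}
    (hf : Continuous f) (hmono : StrictMonoOn f (Iic c)) (hanti : StrictAntiOn f (Ici c))
    (hc : 0 < f c) (hlc : l ≤ c) (hcr : c ≤ r) (hl : f l < 0) (hr : f r < 0) :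
    ∃ ym yp, PosBetweenTwoZeros f ym yp := by
  obtain ⟨ym, ⟨-, hym⟩, hfym⟩ := intermediate_value_Icc hlc hf.continuousOn ⟨hl.le, hc.le⟩
  obtain ⟨yp, ⟨hyp, -⟩, hfyp⟩ := intermediate_value_Icc' hcr hf.continuousOn ⟨hr.le, hc.le⟩
  have hym_lt : ym < c := hym.lt_of_ne (by rintro rfl; linarith)
  have hyp_gt : c < yp := hyp.lt_of_ne (by rintro rfl; linarith)
  have sign_left {y} (hy : y ≤ c) :
      (0 < f y ↔ ym < y) ∧ (f y = 0 ↔ y = ym) ∧ (f y < 0 ↔ y < ym) := by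
    have hmem : ym ∈ Iic c := hym
    rw [← hfym]
    exact ⟨hmono.lt_iff_lt hmem hy, hmono.injOn.eq_iff hy hmem, hmono.lt_iff_lt hy hmem⟩
  have sign_right {y} (hy : c ≤ y) :
      (0 < f y ↔ y < yp) ∧ (f y = 0 ↔ y = yp) ∧ (f y < 0 ↔ yp < y) := by
    have hmem : yp ∈ Ici c := hyp
    rw [← hfyp]
    exact ⟨hanti.lt_iff_gt hmem hy, hanti.injOn.eq_iff hy hmem, hanti.lt_iff_gt hy hmem⟩
  refine ⟨ym, yp, hym_lt.trans hyp_gt, hfym, hfyp,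
    fun y hy => ?_, fun y h₁ h₂ => ?_, fun y hy => ?_⟩
  · rcases le_total y c with h | h
    exacts [.inl ((sign_left h).2.1.1 hy), .inr ((sign_right h).2.1.1 hy)]
  · rcases le_total y c with h | h
    exacts [(sign_left h).1.2 h₁, (sign_right h).1.2 h₂]
  · rcases hy with h | h
    · exact (sign_left (h.le.trans hym_lt.le)).2.2.2 h
    · exact (sign_right (hyp_gt.le.trans h.le)).2.2.2 h

/-- `cosh ((y - b) / a)` times the inner product `X · ν` of the paper. -/
noncomputable def catenarySupport (a b y : ℝ) : ℝ :=
  a * cosh ((y - b) / a) - y * sinh ((y - b) / a)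

theorem sub_mul_tanh_eq_catenarySupport_div (a b y : ℝ) :
    a - y * tanh ((y - b) / a) = catenarySupport a b y / cosh ((y - b) / a) := by
  rw [tanh_eq_sinh_div_cosh, catenarySupport, eq_div_iff (cosh_pos _).ne']
  field_simp

theorem hasDerivAt_catenarySupport {a : ℝ} (ha : a ≠ 0) (b y : ℝ) :
    HasDerivAt (catenarySupport a b) (-(y / a) * cosh ((y - b) / a)) y := by
  have hu : HasDerivAt (fun y => (y - b) / a) (1 / a) y :=
    ((hasDerivAt_id y).sub_const b).div_const a
  refine HasDerivAt.congr_deriv (f := catenarySupport a b)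
    ((((hasDerivAt_cosh _).comp y hu).const_mul a).sub
      ((hasDerivAt_id y).mul ((hasDerivAt_sinh _).comp y hu))) ?_
  simp only [id]
  field_simp
  ring

theorem continuous_catenarySupport {a : ℝ} (ha : a ≠ 0) (b : ℝ) :
    Continuous (catenarySupport a b) :=
  continuous_iff_continuousAt.2 fun y => (hasDerivAt_catenarySupport ha b y).continuousAt

theorem strictMonoOn_catenarySupport {a : ℝ} (ha : 0 < a) (b : ℝ) :
    StrictMonoOn (catenarySupport a b) (Iic 0) := by
  refine strictMonoOn_of_deriv_pos (convex_Iic 0) (continuous_catenarySupport ha.ne' b).continuousOn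
    fun y hy => ?_
  rw [interior_Iic] at hy
  rw [(hasDerivAt_catenarySupport ha.ne' b y).deriv]
  exact mul_pos (neg_pos.2 (div_neg_of_neg_of_pos hy ha)) (cosh_pos _)

theorem strictAntiOn_catenarySupport {a : ℝ} (ha : 0 < a) (b : ℝ) :
    StrictAntiOn (catenarySupport a b) (Ici 0) := by
  refine strictAntiOn_of_deriv_neg (convex_Ici 0) (continuous_catenarySupport ha.ne' b).continuousOn
    fun y hy => ?_
  rw [interior_Ici] at hy
  rw [(hasDerivAt_catenarySupport ha.ne' b y).deriv]
  exact mul_neg_of_neg_of_pos (neg_neg_of_pos (div_pos hy ha)) (cosh_pos _)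

theorem catenarySupport_zero_pos {a : ℝ} (ha : 0 < a) (b : ℝ) : 0 < catenarySupport a b 0 := by
  simpa [catenarySupport] using mul_pos ha (cosh_pos ((0 - b) / a))

theorem mul_cosh_sub_mul_sinh_neg {a u M : ℝ} (ha : 0 < a) (hu : 1 ≤ u) (hM : 2 * a ≤ M) :
    a * cosh u - M * sinh u < 0 := by
  have hexp : exp (-u) < 1 := exp_lt_one_iff.2 (by linarith)
  have hsinh : 1 < sinh u := hu.trans_lt (self_lt_sinh_iff.2 (by linarith))
  have key : a * cosh u - M * sinh u = a * exp (-u) - (M - a) * sinh u := by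
    rw [← cosh_sub_sinh]; ring
  rw [key]
  nlinarith

theorem catenarySupport_neg {a : ℝ} (ha : 0 < a) (b : ℝ) {y : ℝ} (hy : |b| + 2 * a ≤ |y|) :
    catenarySupport a b y < 0 := by
  have hb := neg_abs_le b
  have hb' := le_abs_self b
  rcases le_total 0 y with h | h
  · rw [abs_of_nonneg h] at hy
    exact mul_cosh_sub_mul_sinh_neg ha ((one_le_div ha).2 (by linarith)) (by linarith)
  · rw [abs_of_nonpos h] at hy
    have := mul_cosh_sub_mul_sinh_neg (M := -y) ha
      ((one_le_div ha).2 (by linarith) : 1 ≤ (b - y) / a) (by linarith)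
    rwa [← neg_sub y b, neg_div, cosh_neg, sinh_neg, neg_mul_neg] at this

/-- For every `a > 0` and `b ∈ ℝ`, the function `f(y) = a − y·tanh((y − b)/a)` has exactly
two zeros `ym < yp`; moreover `f > 0` on `(ym, yp)` and `f < 0` outside `[ym, yp]`. -/
theorem catenary_position_normal_two_zeros (a b : ℝ) (ha : 0 < a) :
    ∃ ym yp : ℝ, ym < yp ∧
      a - ym * Real.tanh ((ym - b) / a) = 0 ∧
      a - yp * Real.tanh ((yp - b) / a) = 0 ∧
      (∀ y : ℝ, a - y * Real.tanh ((y - b) / a) = 0 → y = ym ∨ y = yp) ∧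
      (∀ y : ℝ, ym < y → y < yp → 0 < a - y * Real.tanh ((y - b) / a)) ∧
      (∀ y : ℝ, y < ym ∨ yp < y → a - y * Real.tanh ((y - b) / a) < 0) := by
  set R := |b| + 2 * a
  have hR : 0 ≤ R := by positivity
  obtain ⟨ym, yp, h⟩ := exists_posBetweenTwoZeros_of_strictMonoOn_strictAntiOn
    (continuous_catenarySupport ha.ne' b) (strictMonoOn_catenarySupport ha b)
    (strictAntiOn_catenarySupport ha b) (catenarySupport_zero_pos ha b)
    (neg_nonpos.2 hR) hR (catenarySupport_neg ha b (by rw [abs_neg, abs_of_nonneg hR]))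
    (catenarySupport_neg ha b (abs_of_nonneg hR).ge)
  have hf : (fun y => a - y * tanh ((y - b) / a)) =
      fun y => (cosh ((y - b) / a))⁻¹ * catenarySupport a b y := by
    funext y
    rw [sub_mul_tanh_eq_catenarySupport_div, div_eq_inv_mul]
  have := h.pos_mul (w := fun y => (cosh ((y - b) / a))⁻¹) fun y => inv_pos.2 (cosh_pos _)
  rw [← hf] at this
  exact ⟨ym, yp, this⟩
end

section
/- Let a > 0, b ∈ ℝ, β ∈ (0, π) and γ ∈ (0, π). If a·cosh((cos β − b)/a) = sin β and sinh((cos β − b)/a) = −cot γ, then a = sin β · sin γ and a − cos β · tanh((cos β − b)/a) = cos(γ − β). In particular, if the catenary meets the unit circle at latitude β with inward angle α (so γ = α + β), then a = sin β·sin(α + β) and X·ν at the meeting point equals cos α; if it meets the unit circle at latitude β with outward angle α (so γ = β − α), then a = sin β·sin(β − α) and X·ν at the meeting point equals cos α. -/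
open Real

lemma Real.cosh_mul_sin_eq_one_of_sinh_eq_neg_cot {x γ : ℝ} (hγ : 0 < sin γ)
    (h : sinh x = -cot γ) : cosh x * sin γ = 1 := by
  have hsq : (cosh x * sin γ) ^ 2 = 1 := by
    rw [mul_pow, cosh_sq, h, cot_eq_cos_div_sin]
    field_simp
    linarith [sin_sq_add_cos_sq γ]
  have hpos : 0 < cosh x * sin γ := mul_pos (cosh_pos x) hγ
  nlinarith

lemma Real.tanh_eq_neg_cos_of_sinh_eq_neg_cot {x γ : ℝ} (hγ : 0 < sin γ)
    (h : sinh x = -cot γ) : tanh x = -cos γ := by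
  have hc := cosh_mul_sin_eq_one_of_sinh_eq_neg_cot hγ h
  rw [tanh_eq_sinh_div_cosh, h, cot_eq_cos_div_sin, eq_inv_of_mul_eq_one_right hc]
  field_simp

theorem catenary_circle_meeting_formulas_general (a b β γ : ℝ)
    (hγ : γ ∈ Set.Ioo 0 π)
    (h1 : a * Real.cosh ((Real.cos β - b) / a) = Real.sin β)
    (h2 : Real.sinh ((Real.cos β - b) / a) = -Real.cot γ) :
    a = Real.sin β * Real.sin γ ∧
      a - Real.cos β * Real.tanh ((Real.cos β - b) / a) = Real.cos (γ - β) := by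
  have hsγ : 0 < sin γ := sin_pos_of_pos_of_lt_pi hγ.1 hγ.2
  have ha : a = sin β * sin γ := by
    calc a = a * (cosh ((cos β - b) / a) * sin γ) := by
          rw [cosh_mul_sin_eq_one_of_sinh_eq_neg_cot hsγ h2, mul_one]
      _ = sin β * sin γ := by rw [← mul_assoc, h1]
  refine ⟨ha, ?_⟩
  rw [tanh_eq_neg_cos_of_sinh_eq_neg_cot hsγ h2, cos_sub, ha]
  ring

/-- If the catenary `x = a·cosh((y − b)/a)` meets the unit circle at latitude `β` with
slope angle `γ` (so `sinh((cos β − b)/a) = −cot γ`), then `a = sin β · sin γ` and the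
inner product `X·ν = a − cos β · tanh((cos β − b)/a)` equals `cos (γ − β)`. -/
theorem catenary_circle_meeting_formulas (a b β γ : ℝ) (ha : 0 < a)
    (hβ : β ∈ Set.Ioo 0 π) (hγ : γ ∈ Set.Ioo 0 π)
    (h1 : a * Real.cosh ((Real.cos β - b) / a) = Real.sin β)
    (h2 : Real.sinh ((Real.cos β - b) / a) = -Real.cot γ) :
    a = Real.sin β * Real.sin γ ∧
      a - Real.cos β * Real.tanh ((Real.cos β - b) / a) = Real.cos (γ - β) :=
  catenary_circle_meeting_formulas_general a b β γ hγ h1 h2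
end

section
/- Let a > 0, b ∈ ℝ, let J ⊆ (0, π) be an open interval, and let r : J → (0, ∞) be twice differentiable with a·cosh((r(β)·cos β − b)/a) = r(β)·sin β for all β ∈ J, and suppose the derivative of β ↦ r(β)·cos β is nonzero on J. Then the function v := −r'/r satisfies v'(β) = −cot(β)·v(β)·(v(β)² + 1) − 2·(v(β)² + 1) for all β ∈ J. -/
/-!
Write the curve as `x = r sin β`, `y = r cos β`, so that `x = a cosh u` with `u = (y - b)/a`.
Differentiating twice gives `x' = sinh u · y'` and `x'' = cosh u · y'²/a + sinh u · y''`, and with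
`cosh² u - sinh² u = 1` these combine to the curvature identity `x (x''y' - x'y'') = y' (x'² + y'²)`
of the catenary. In polar form `x'² + y'² = r'² + r²` and `x''y' - x'y'' = -r r'' + 2r'² + r²`,
and the resulting relation between `r, r', r''` is the polar catenary equation for `v = -r'/r`.
-/

open Real Filter Topology

section Catenary

variable {a b t : ℝ} {x y : ℝ → ℝ}

theorem catenary_deriv_eq_sinh_mul (ha : a ≠ 0)
    (hcat : ∀ᶠ s in 𝓝 t, a * cosh ((y s - b) / a) = x s)
    {x₁ y₁ : ℝ} (hx : HasDerivAt x x₁ t) (hy : HasDerivAt y y₁ t) :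
    x₁ = sinh ((y t - b) / a) * y₁ := by
  have hcosh : HasDerivAt (fun s => a * cosh ((y s - b) / a))
      (a * (sinh ((y t - b) / a) * (y₁ / a))) t :=
    ((hasDerivAt_cosh _).comp t ((hy.sub_const b).div_const a)).const_mul a
  rw [hx.unique (hcosh.congr_of_eventuallyEq (hcat.mono fun _ h => h.symm))]
  field_simp

theorem catenary_secondDeriv_eq (ha : a ≠ 0)
    (hcat : ∀ᶠ s in 𝓝 t, a * cosh ((y s - b) / a) = x s)
    {x' y' : ℝ → ℝ} (hx : ∀ᶠ s in 𝓝 t, HasDerivAt x (x' s) s)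
    (hy : ∀ᶠ s in 𝓝 t, HasDerivAt y (y' s) s)
    {x'' y'' : ℝ} (hx' : HasDerivAt x' x'' t) (hy' : HasDerivAt y' y'' t) :
    x'' = cosh ((y t - b) / a) * (y' t / a) * y' t + sinh ((y t - b) / a) * y'' := by
  have hfirst : ∀ᶠ s in 𝓝 t, x' s = sinh ((y s - b) / a) * y' s := by
    filter_upwards [hcat.eventually_nhds, hx, hy] with s hcat_s hx_s hy_s
    exact catenary_deriv_eq_sinh_mul ha hcat_s hx_s hy_s
  have hsinh : HasDerivAt (fun s => sinh ((y s - b) / a) * y' s)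
      (cosh ((y t - b) / a) * (y' t / a) * y' t + sinh ((y t - b) / a) * y'') t :=
    ((hasDerivAt_sinh _).comp t ((hy.self_of_nhds.sub_const b).div_const a)).mul hy'
  exact hx'.unique (hsinh.congr_of_eventuallyEq hfirst)

theorem catenary_curvature_identity (ha : a ≠ 0)
    (hcat : ∀ᶠ s in 𝓝 t, a * cosh ((y s - b) / a) = x s)
    {x' y' : ℝ → ℝ} (hx : ∀ᶠ s in 𝓝 t, HasDerivAt x (x' s) s)
    (hy : ∀ᶠ s in 𝓝 t, HasDerivAt y (y' s) s)
    {x'' y'' : ℝ} (hx' : HasDerivAt x' x'' t) (hy' : HasDerivAt y' y'' t) :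
    x t * (x'' * y' t - x' t * y'') = y' t * (x' t ^ 2 + y' t ^ 2) := by
  rw [← hcat.self_of_nhds, catenary_secondDeriv_eq ha hcat hx hy hx' hy',
    catenary_deriv_eq_sinh_mul ha hcat hx.self_of_nhds hy.self_of_nhds]
  field_simp
  linear_combination (y' t) ^ 3 * cosh_sq_sub_sinh_sq ((y t - b) / a)

end Catenary

section Polar

variable {t : ℝ} {r r' : ℝ → ℝ} {r'' : ℝ}

theorem radial_catenary_relation {a b : ℝ} (ha : a ≠ 0)
    (hcat : ∀ᶠ s in 𝓝 t, a * cosh ((r s * cos s - b) / a) = r s * sin s)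
    (hr : ∀ᶠ s in 𝓝 t, HasDerivAt r (r' s) s) (hr' : HasDerivAt r' r'' t) :
    r t * sin t * (-(r t * r'') + 2 * r' t ^ 2 + r t ^ 2)
      = (r' t * cos t - r t * sin t) * (r' t ^ 2 + r t ^ 2) := by
  have hx : ∀ᶠ s in 𝓝 t, HasDerivAt (fun s => r s * sin s) (r' s * sin s + r s * cos s) s :=
    hr.mono fun s hs => hs.mul (hasDerivAt_sin s)
  have hy : ∀ᶠ s in 𝓝 t, HasDerivAt (fun s => r s * cos s) (r' s * cos s - r s * sin s) s :=
    hr.mono fun s hs => (hs.mul (hasDerivAt_cos s)).congr_deriv (by ring)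
  have hrt := hr.self_of_nhds
  have hx' := (hr'.mul (hasDerivAt_sin t)).add (hrt.mul (hasDerivAt_cos t))
  have hy' := (hr'.mul (hasDerivAt_cos t)).sub (hrt.mul (hasDerivAt_sin t))
  have hcurv := catenary_curvature_identity ha hcat hx hy hx' hy'
  linear_combination hcurv + (r t * (r'' * r t - 3 * r' t ^ 2 - 2 * r t ^ 2) * sin t
    + (r' t ^ 2 + r t ^ 2) * r' t * cos t) * sin_sq_add_cos_sq t

theorem hasDerivAt_polarCatenary_of_relation (hr : HasDerivAt r (r' t) t)
    (hr' : HasDerivAt r' r'' t) (hr0 : r t ≠ 0) (hsin : sin t ≠ 0)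
    (hrel : r t * sin t * (-(r t * r'') + 2 * r' t ^ 2 + r t ^ 2)
      = (r' t * cos t - r t * sin t) * (r' t ^ 2 + r t ^ 2)) :
    HasDerivAt (fun s => -(r' s / r s))
      (-cot t * (-(r' t / r t)) * ((-(r' t / r t)) ^ 2 + 1)
        - 2 * ((-(r' t / r t)) ^ 2 + 1)) t := by
  refine (hr'.div hr hr0).neg.congr_deriv ?_
  rw [cot_eq_cos_div_sin]
  field_simp
  linear_combination hrel

end Polar

theorem polar_catenary_equation_general (a b : ℝ) (ha : 0 < a) (J : Set ℝ)
    (hJ : ∃ c d : ℝ, J = Set.Ioo c d) (hJsub : J ⊆ Set.Ioo 0 π)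
    (r r' r'' : ℝ → ℝ)
    (hrpos : ∀ β ∈ J, 0 < r β)
    (hr : ∀ β ∈ J, HasDerivAt r (r' β) β)
    (hr' : ∀ β ∈ J, HasDerivAt r' (r'' β) β)
    (hcat : ∀ β ∈ J, a * Real.cosh ((r β * Real.cos β - b) / a) = r β * Real.sin β) :
    ∀ β ∈ J, HasDerivAt (fun t => -(r' t / r t))
      (-Real.cot β * (-(r' β / r β)) * ((-(r' β / r β)) ^ 2 + 1)
        - 2 * ((-(r' β / r β)) ^ 2 + 1)) β := by
  obtain ⟨c, d, rfl⟩ := hJ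
  intro β hβ
  have hnear : ∀ᶠ t in 𝓝 β, t ∈ Set.Ioo c d := isOpen_Ioo.mem_nhds hβ
  have hsin : sin β ≠ 0 := (sin_pos_of_pos_of_lt_pi (hJsub hβ).1 (hJsub hβ).2).ne'
  exact hasDerivAt_polarCatenary_of_relation (hr β hβ) (hr' β hβ) (hrpos β hβ).ne' hsin
    (radial_catenary_relation ha.ne' (hnear.mono hcat) (hnear.mono hr) (hr' β hβ))

/-- If `r : J → (0,∞)` is a twice differentiable radial-graph parametrization of the
catenary `x = a·cosh((y − b)/a)` in polar coordinates (latitude `β` from the north pole),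
and the derivative of `β ↦ r(β)·cos β` is nonzero on `J`, then `v := −r'/r` satisfies
the polar catenary equation `v' = −cot β · v·(v² + 1) − 2·(v² + 1)` on `J`. -/
theorem polar_catenary_equation (a b : ℝ) (ha : 0 < a) (J : Set ℝ)
    (hJ : ∃ c d : ℝ, J = Set.Ioo c d) (hJsub : J ⊆ Set.Ioo 0 π)
    (r r' r'' : ℝ → ℝ)
    (hrpos : ∀ β ∈ J, 0 < r β)
    (hr : ∀ β ∈ J, HasDerivAt r (r' β) β)
    (hr' : ∀ β ∈ J, HasDerivAt r' (r'' β) β)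
    (hcat : ∀ β ∈ J, a * Real.cosh ((r β * Real.cos β - b) / a) = r β * Real.sin β)
    (hnz : ∀ β ∈ J, r' β * Real.cos β - r β * Real.sin β ≠ 0) :
    ∀ β ∈ J, HasDerivAt (fun t => -(r' t / r t))
      (-Real.cot β * (-(r' β / r β)) * ((-(r' β / r β)) ^ 2 + 1)
        - 2 * ((-(r' β / r β)) ^ 2 + 1)) β :=
  polar_catenary_equation_general a b ha J hJ hJsub r r' r'' hrpos hr hr' hcat
end

section
/- Let 0 < β₀ < β₁ ≤ π/2 and let v : (β₀, β₁] → ℝ be differentiable and satisfy the polar catenary equation v'(β) = −cot(β)·v(β)·(v(β)² + 1) − 2·(v(β)² + 1) for all β ∈ (β₀, β₁]. If v(β) → +∞ as β → β₀⁺, then v is strictly decreasing on (β₀, β₁]. -/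
/-!
With `u = cos β · v + 2 sin β` the equation reads `v' = -(v² + 1) · u / sin β`, so on
`(β₀, β₁] ⊆ (0, π/2]` the function `v` decreases exactly where `u > 0`. Near `β₀` we have
`u > 0` because `v → +∞`. And `u` can never drop to `0` from above: wherever `u ≤ 0` we get
`cos β > 0`, `v < 0` and `v' ≥ 0`, hence `u' = -v sin β + v' cos β + 2 cos β > 0`.
-/

open Real Set Filter Topology

theorem HasDerivWithinAt.exists_lt_left {f : ℝ → ℝ} {f' a c : ℝ} {s : Set ℝ}
    (hf : HasDerivWithinAt f f' s c) (hs : Ioo a c ⊆ s) (hac : a < c) (hf' : 0 < f') :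
    ∃ x ∈ Ioo a c, f x < f c := by
  have hleft : HasDerivWithinAt f f' (Iio c) c :=
    (hf.mono hs).mono_of_mem_nhdsWithin (Ioo_mem_nhdsLT hac)
  have hslope : ∀ᶠ x in 𝓝[<] c, 0 < slope f c x :=
    ((hasDerivWithinAt_iff_tendsto_slope' self_notMem_Iio).1 hleft).eventually (lt_mem_nhds hf')
  obtain ⟨x, hx, hxac⟩ := (hslope.and (Ioo_mem_nhdsLT hac)).exists
  refine ⟨x, hxac, ?_⟩
  rw [slope_comm, slope_def_field, div_pos_iff_of_pos_right (sub_pos.2 hxac.2)] at hx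
  exact sub_pos.1 hx

/-- At the first point `c` where `f ≤ 0`, `f' c > 0` would force `f < f c` just before `c`. -/
theorem pos_of_hasDerivWithinAt_pos_of_nonpos {f f' : ℝ → ℝ} {a b : ℝ}
    (hf : ∀ x ∈ Ioc a b, HasDerivWithinAt f (f' x) (Ioc a b) x)
    (hpos : ∀ᶠ x in 𝓝[>] a, 0 < f x) (hf' : ∀ x ∈ Ioc a b, f x ≤ 0 → 0 < f' x) :
    ∀ x ∈ Ioc a b, 0 < f x := by
  by_contra! ⟨x, hx, hfx⟩
  obtain ⟨δ, hδ, hδpos⟩ := mem_nhdsGT_iff_exists_Ioc_subset.1 hpos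
  have hδx : δ < x := lt_of_not_ge fun h => (hδpos ⟨hx.1, h⟩).not_ge hfx
  have hsub : Icc δ x ⊆ Ioc a b := Icc_subset_Ioc hδ hx.2
  have hcont : ContinuousOn f (Icc δ x) := fun y hy =>
    (hf y (hsub hy)).continuousWithinAt.mono hsub
  have hclosed : IsClosed (Icc δ x ∩ f ⁻¹' Iic 0) :=
    hcont.preimage_isClosed_of_isClosed isClosed_Icc isClosed_Iic
  obtain ⟨c, ⟨hc, hfc⟩, hmin⟩ := (isCompact_Icc.of_isClosed_subset hclosed
    inter_subset_left).exists_isLeast ⟨x, right_mem_Icc.2 hδx.le, hfx⟩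
  have hδc : δ < c := lt_of_le_of_ne hc.1 fun h => (hδpos ⟨hδ, le_rfl⟩).not_ge (h ▸ hfc : f δ ≤ 0)
  obtain ⟨y, hy, hfy⟩ := (hf c (hsub hc)).exists_lt_left
    (fun y hy => hsub ⟨hy.1.le, hy.2.le.trans hc.2⟩) hδc (hf' c (hsub hc) hfc)
  exact (hmin ⟨⟨hy.1.le, hy.2.le.trans hc.2⟩, (hfy.trans_le hfc).le⟩).not_gt hy.2

noncomputable def polarCatenaryField (β v : ℝ) : ℝ := -cot β * v * (v ^ 2 + 1) - 2 * (v ^ 2 + 1)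

noncomputable def polarCatenaryFactor (β v : ℝ) : ℝ := cos β * v + 2 * sin β

theorem polarCatenaryField_eq {β : ℝ} (hβ : sin β ≠ 0) (v : ℝ) :
    polarCatenaryField β v = -(v ^ 2 + 1) * polarCatenaryFactor β v / sin β := by
  rw [polarCatenaryField, polarCatenaryFactor, cot_eq_cos_div_sin]
  field_simp
  ring

theorem polarCatenaryField_neg_iff {β : ℝ} (hβ : 0 < sin β) (v : ℝ) :
    polarCatenaryField β v < 0 ↔ 0 < polarCatenaryFactor β v := by
  rw [polarCatenaryField_eq hβ.ne', neg_mul, neg_div, neg_lt_zero,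
    div_pos_iff_of_pos_right hβ, mul_pos_iff_of_pos_left (by positivity)]

theorem polarCatenaryFactor_pos {β v : ℝ} (hs : 0 < sin β) (hc : 0 ≤ cos β) (hv : 0 ≤ v) :
    0 < polarCatenaryFactor β v := by
  unfold polarCatenaryFactor
  positivity

theorem hasDerivWithinAt_polarCatenaryFactor {v : ℝ → ℝ} {v' β : ℝ} {s : Set ℝ}
    (hv : HasDerivWithinAt v v' s β) :
    HasDerivWithinAt (fun β => polarCatenaryFactor β (v β))
      (-sin β * v β + cos β * v' + 2 * cos β) s β :=
  ((hasDerivAt_cos β).hasDerivWithinAt.mul hv).add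
    ((hasDerivAt_sin β).hasDerivWithinAt.const_mul 2)

theorem polarCatenaryFactor_deriv_pos {β v v' : ℝ} (hs : 0 < sin β) (hc : 0 ≤ cos β)
    (hu : polarCatenaryFactor β v ≤ 0) (hv' : 0 ≤ v') :
    0 < -sin β * v + cos β * v' + 2 * cos β := by
  unfold polarCatenaryFactor at hu
  have hc : 0 < cos β := hc.lt_of_ne fun h => by rw [← h] at hu; linarith
  have hv : v < 0 := by nlinarith
  nlinarith [mul_nonneg hc.le hv']

/-- If `v` satisfies the polar catenary equation on `(β₀, β₁]` with `β₁ ≤ π/2`, and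
`v(β) → +∞` as `β → β₀⁺`, then `v` is strictly decreasing on `(β₀, β₁]`. -/
theorem polar_catenary_strictAnti (β₀ β₁ : ℝ) (h0 : 0 < β₀) (h01 : β₀ < β₁)
    (h1 : β₁ ≤ π / 2) (v : ℝ → ℝ)
    (hv : ∀ β ∈ Set.Ioc β₀ β₁,
      HasDerivWithinAt v
        (-Real.cot β * v β * (v β ^ 2 + 1) - 2 * (v β ^ 2 + 1)) (Set.Ioc β₀ β₁) β)
    (hlim : Filter.Tendsto v (nhdsWithin β₀ (Set.Ioi β₀)) Filter.atTop) :
    StrictAntiOn v (Set.Ioc β₀ β₁) := by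
  have hsin : ∀ β ∈ Ioc β₀ β₁, 0 < sin β := fun β hβ =>
    sin_pos_of_pos_of_lt_pi (h0.trans hβ.1) (by linarith [hβ.2, pi_pos])
  have hcos : ∀ β ∈ Ioc β₀ β₁, 0 ≤ cos β := fun β hβ =>
    cos_nonneg_of_mem_Icc ⟨by linarith [hβ.1, pi_pos], hβ.2.trans h1⟩
  have hfactor : ∀ β ∈ Ioc β₀ β₁, 0 < polarCatenaryFactor β (v β) := by
    have hstart : ∀ᶠ β in 𝓝[>] β₀, 0 < polarCatenaryFactor β (v β) := by
      filter_upwards [hlim.eventually_ge_atTop 0, Ioc_mem_nhdsGT h01] with β hvβ hβ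
      exact polarCatenaryFactor_pos (hsin β hβ) (hcos β hβ) hvβ
    refine pos_of_hasDerivWithinAt_pos_of_nonpos
      (fun β hβ => hasDerivWithinAt_polarCatenaryFactor (hv β hβ)) hstart fun β hβ hu => ?_
    have hv' : 0 ≤ polarCatenaryField β (v β) :=
      not_lt.1 <| mt (polarCatenaryField_neg_iff (hsin β hβ) _).1 hu.not_gt
    exact polarCatenaryFactor_deriv_pos (hsin β hβ) (hcos β hβ) hu hv'
  refine strictAntiOn_of_hasDerivWithinAt_neg (f' := fun β => polarCatenaryField β (v β))
    (convex_Ioc β₀ β₁) (fun β hβ => (hv β hβ).continuousWithinAt) (fun β hβ => ?_) fun β hβ => ?_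
  · rw [interior_Ioc] at hβ ⊢
    exact (hv β (Ioo_subset_Ioc_self hβ)).mono Ioo_subset_Ioc_self
  · rw [interior_Ioc] at hβ
    exact (polarCatenaryField_neg_iff (hsin β (Ioo_subset_Ioc_self hβ)) _).2
      (hfactor β (Ioo_subset_Ioc_self hβ))
end

section
/- For every a > 0 and b ∈ ℝ, the function y ↦ (a·cosh((y − b)/a))² + y² is strictly convex on ℝ; consequently, for every R ∈ ℝ the set {y ∈ ℝ : (a·cosh((y − b)/a))² + y² ≤ R} is either empty, a single point, or a closed bounded interval. -/
/-!
The term `(a cosh((y - b)/a))²` is convex as the square of a positive convex function, and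
`y²` is strictly convex, so their sum is strictly convex. Its sublevel sets are therefore convex;
they are closed by continuity and bounded because the function dominates `y²`. A compact convex
subset of `ℝ` is empty, a point, or a nondegenerate closed interval.
-/

open Real Set

theorem convexOn_cosh : ConvexOn ℝ univ cosh := by
  have h := (convexOn_exp.add (convexOn_exp.comp_linearMap (-LinearMap.id))).smul
    (by norm_num : (0 : ℝ) ≤ 2⁻¹)
  refine h.congr fun x _ => ?_
  simp only [Pi.add_apply, Function.comp_apply, LinearMap.neg_apply,
    LinearMap.id_apply, smul_eq_mul, cosh_eq]
  ring

theorem ConvexOn.comp_mul_add {f : ℝ → ℝ} (hf : ConvexOn ℝ univ f) (k c : ℝ) :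
    ConvexOn ℝ univ fun y => f (k * y + c) := by
  refine ⟨convex_univ, fun x _ y _ s t hs ht hst => ?_⟩
  calc f (k * (s • x + t • y) + c) = f (s • (k * x + c) + t • (k * y + c)) := by
        congr 1; simp only [smul_eq_mul]; linear_combination (-c) * hst
    _ ≤ s • f (k * x + c) + t • f (k * y + c) := hf.2 trivial trivial hs ht hst

theorem convexOn_sq_mul_cosh_div (a b : ℝ) :
    ConvexOn ℝ univ fun y => (a * cosh ((y - b) / a)) ^ 2 := by
  have h := ((convexOn_cosh.comp_mul_add a⁻¹ (-b / a)).pow (fun _ _ => (cosh_pos _).le) 2).smul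
    (sq_nonneg a)
  refine h.congr fun y _ => ?_
  simp only [Pi.pow_apply, smul_eq_mul, mul_pow]
  ring_nf

theorem Convex.eq_empty_or_singleton_or_Icc {s : Set ℝ} (hs : Convex ℝ s) (hc : IsCompact s) :
    s = ∅ ∨ (∃ x, s = {x}) ∨ ∃ c d, c < d ∧ s = Icc c d := by
  rcases s.eq_empty_or_nonempty with hempty | hne
  · exact Or.inl hempty
  have hIcc := eq_Icc_of_connected_compact (hs.isConnected hne) hc
  rcases (csInf_le hc.bddBelow (hc.sSup_mem hne)).eq_or_lt with heq | hlt
  · exact Or.inr (Or.inl ⟨sInf s, hIcc.trans (by rw [← heq, Icc_self])⟩)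
  · exact Or.inr (Or.inr ⟨_, _, hlt, hIcc⟩)

theorem isCompact_setOf_le_of_sq_le {f : ℝ → ℝ} (hf : Continuous f)
    (hsq : ∀ y, y ^ 2 ≤ f y) (R : ℝ) : IsCompact {y | f y ≤ R} := by
  refine (isCompact_Icc (a := -√R) (b := √R)).of_isClosed_subset
    (isClosed_le hf continuous_const)
    (fun y (hy : f y ≤ R) => abs_le.mp ?_)
  exact Real.abs_le_sqrt ((hsq y).trans hy)

theorem catenary_sq_dist_strictConvex_general (a b : ℝ) :
    StrictConvexOn ℝ Set.univ
        (fun y : ℝ => (a * Real.cosh ((y - b) / a)) ^ 2 + y ^ 2) ∧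
      ∀ R : ℝ,
        {y : ℝ | (a * Real.cosh ((y - b) / a)) ^ 2 + y ^ 2 ≤ R} = ∅ ∨
        (∃ y₀ : ℝ, {y : ℝ | (a * Real.cosh ((y - b) / a)) ^ 2 + y ^ 2 ≤ R} = {y₀}) ∨
        (∃ c d : ℝ, c < d ∧
          {y : ℝ | (a * Real.cosh ((y - b) / a)) ^ 2 + y ^ 2 ≤ R} = Set.Icc c d) := by
  have hconv : StrictConvexOn ℝ univ fun y => (a * cosh ((y - b) / a)) ^ 2 + y ^ 2 :=
    (convexOn_sq_mul_cosh_div a b).add_strictConvexOn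
      (Even.strictConvexOn_pow even_two two_ne_zero)
  refine ⟨hconv, fun R => Convex.eq_empty_or_singleton_or_Icc ?_ ?_⟩
  · simpa using hconv.convexOn.convex_le R
  · exact isCompact_setOf_le_of_sq_le (by fun_prop)
      (fun y => le_add_of_nonneg_left (sq_nonneg _)) R

/-- For `a > 0`, `b ∈ ℝ`, the function `y ↦ (a·cosh((y − b)/a))² + y²` is strictly convex
on `ℝ`; consequently each sublevel set is empty, a single point, or a closed bounded
interval. -/
theorem catenary_sq_dist_strictConvex (a b : ℝ) (ha : 0 < a) :
    StrictConvexOn ℝ Set.univ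
        (fun y : ℝ => (a * Real.cosh ((y - b) / a)) ^ 2 + y ^ 2) ∧
      ∀ R : ℝ,
        {y : ℝ | (a * Real.cosh ((y - b) / a)) ^ 2 + y ^ 2 ≤ R} = ∅ ∨
        (∃ y₀ : ℝ, {y : ℝ | (a * Real.cosh ((y - b) / a)) ^ 2 + y ^ 2 ≤ R} = {y₀}) ∨
        (∃ c d : ℝ, c < d ∧
          {y : ℝ | (a * Real.cosh ((y - b) / a)) ^ 2 + y ^ 2 ≤ R} = Set.Icc c d) :=
  catenary_sq_dist_strictConvex_general a b
end

section
/- Let a > 0, b ∈ ℝ, and let y₋ < y₊ be real numbers with (a·cosh((y₋ − b)/a))² + y₋² = 1 and (a·cosh((y₊ − b)/a))² + y₊² = 1. Then sgn(b) = sgn(y₋ + y₊); that is: b > 0 if and only if y₋ + y₊ > 0, b = 0 if and only if y₋ + y₊ = 0, and b < 0 if and only if y₋ + y₊ < 0. -/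
/-!
Put `u = (y₊ - b)/a` and `v = (y₋ - b)/a`. Subtracting the two circle equations and using
`cosh² u - cosh² v = sinh (u + v) sinh (u - v)` gives
`a² sinh (u + v) sinh (u - v) = -(y₊ - y₋)(y₋ + y₊)`. Since `u - v > 0`, this says
`sinh ((y₋ + y₊ - 2b)/a) = -k (y₋ + y₊)` for some `k > 0`, i.e.
`b = (s + a arsinh (k s))/2` with `s = y₋ + y₊`. The right-hand side is a strictly increasing
function of `s` vanishing at `0`, so `b` and `s` have the same sign.
-/

open Real

namespace Real

theorem sign_eq_one_iff {x : ℝ} : sign x = 1 ↔ 0 < x := by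
  refine ⟨fun h => ?_, sign_of_pos⟩
  rcases lt_trichotomy x 0 with hx | rfl | hx
  · rw [sign_of_neg hx] at h; norm_num at h
  · rw [sign_zero] at h; norm_num at h
  · exact hx

theorem sign_eq_neg_one_iff {x : ℝ} : sign x = -1 ↔ x < 0 := by
  rw [← neg_inj, ← sign_neg, neg_neg, sign_eq_one_iff, neg_pos]

theorem sign_apply_of_strictMono {f : ℝ → ℝ} (hf : StrictMono f) (hf0 : f 0 = 0) (x : ℝ) :
    sign (f x) = sign x := by
  rcases lt_trichotomy x 0 with hx | rfl | hx
  · rw [sign_of_neg hx, sign_of_neg (hf0 ▸ hf hx)]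
  · rw [hf0]
  · rw [sign_of_pos hx, sign_of_pos (hf0 ▸ hf hx)]

theorem cosh_sq_sub_cosh_sq (u v : ℝ) :
    cosh u ^ 2 - cosh v ^ 2 = sinh (u + v) * sinh (u - v) := by
  rw [sinh_add, sinh_sub]
  linear_combination cosh v ^ 2 * cosh_sq_sub_sinh_sq u - cosh u ^ 2 * cosh_sq_sub_sinh_sq v

end Real

theorem catenary_exists_shift_eq_arsinh {a b ym yp : ℝ} (ha : 0 < a) (hlt : ym < yp)
    (hm : (a * cosh ((ym - b) / a)) ^ 2 + ym ^ 2 = 1)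
    (hp : (a * cosh ((yp - b) / a)) ^ 2 + yp ^ 2 = 1) :
    ∃ k > 0, b = (ym + yp + a * arsinh (k * (ym + yp))) / 2 := by
  set u := (yp - b) / a
  set v := (ym - b) / a
  have hsum : u + v = (ym + yp - 2 * b) / a := by ring
  have hdiff : u - v = (yp - ym) / a := by ring
  have hdiff_pos : 0 < sinh (u - v) := sinh_pos_iff.2 (hdiff ▸ div_pos (sub_pos.2 hlt) ha)
  have hkey : a ^ 2 * sinh (u + v) * sinh (u - v) = -((yp - ym) * (ym + yp)) := by
    rw [mul_assoc, ← cosh_sq_sub_cosh_sq]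
    linear_combination hp - hm
  set k := (yp - ym) / (a ^ 2 * sinh (u - v))
  have hk : 0 < k := div_pos (sub_pos.2 hlt) (by positivity)
  have hsinh : sinh (u + v) = -(k * (ym + yp)) := by
    simp only [k]
    field_simp
    linear_combination hkey
  refine ⟨k, hk, ?_⟩
  have harsinh : (ym + yp - 2 * b) / a = -arsinh (k * (ym + yp)) := by
    rw [← hsum, ← arsinh_neg, ← hsinh, arsinh_sinh]
  rw [div_eq_iff ha.ne'] at harsinh
  linear_combination -harsinh / 2

/-- If the catenary `x = a·cosh((y − b)/a)` meets the unit circle at two distinct heights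
`ym < yp`, then `sgn b = sgn (ym + yp)`. -/
theorem catenary_sign_b (a b ym yp : ℝ) (ha : 0 < a) (hlt : ym < yp)
    (hm : (a * Real.cosh ((ym - b) / a)) ^ 2 + ym ^ 2 = 1)
    (hp : (a * Real.cosh ((yp - b) / a)) ^ 2 + yp ^ 2 = 1) :
    Real.sign b = Real.sign (ym + yp) ∧
      (0 < b ↔ 0 < ym + yp) ∧ (b = 0 ↔ ym + yp = 0) ∧ (b < 0 ↔ ym + yp < 0) := by
  obtain ⟨k, hk, hb⟩ := catenary_exists_shift_eq_arsinh ha hlt hm hp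
  have hmono : StrictMono fun s => (s + a * arsinh (k * s)) / 2 :=
    (strictMono_id.add <|
      (arsinh_strictMono.comp (strictMono_mul_left_of_pos hk)).const_mul ha).div_const two_pos
  have hsign : sign b = sign (ym + yp) := by
    rw [hb]
    exact sign_apply_of_strictMono hmono (by simp) (ym + yp)
  refine ⟨hsign, ?_, ?_, ?_⟩
  · rw [← sign_eq_one_iff, hsign, sign_eq_one_iff]
  · rw [← sign_eq_zero_iff, hsign, sign_eq_zero_iff]
  · rw [← sign_eq_neg_one_iff, hsign, sign_eq_neg_one_iff]
end

section
/- Let β ∈ (0, π) and α ∈ (0, π − β). Then there exist unique a > 0 and b ∈ ℝ such that a·cosh((cos β − b)/a) = sin β and sinh((cos β − b)/a) = −cot(α + β); moreover a = sin β · sin(α + β) and b = cos β − sgn(α + β − π/2) · sin β · sin(α + β) · arcosh(1/sin(α + β)). -/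
/-!
Put `γ = α + β` and `t = (cos β - b) / a`. The second equation says `t = arsinh (-cot γ)`, and
then `cosh t = √(1 + cot² γ) = 1 / sin γ`, so the first one forces `a = sin β · sin γ`; this
gives existence and uniqueness at once. The closed form of `b` comes from
`arsinh x = sgn x · arcosh √(1 + x²)` together with `sgn (-cot γ) = sgn (γ - π/2)` for
`γ ∈ (0, π)`.
-/

open Real

/-- The inverse of `cosh` on `[1, ∞)`. -/
noncomputable def arcosh (x : ℝ) : ℝ := Real.log (x + Real.sqrt (x ^ 2 - 1))

theorem arcosh_sqrt_one_add_sq (x : ℝ) : _root_.arcosh √(1 + x ^ 2) = arsinh |x| := by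
  rw [_root_.arcosh, sq_sqrt (by positivity), add_sub_cancel_left, sqrt_sq_eq_abs, arsinh,
    sq_abs, add_comm]

theorem arsinh_eq_sign_mul_arcosh (x : ℝ) :
    arsinh x = Real.sign x * _root_.arcosh √(1 + x ^ 2) := by
  rw [arcosh_sqrt_one_add_sq]
  rcases lt_trichotomy x 0 with hx | rfl | hx
  · rw [Real.sign_of_neg hx, abs_of_neg hx, arsinh_neg]; ring
  · simp
  · rw [Real.sign_of_pos hx, abs_of_pos hx, one_mul]

theorem sqrt_one_add_cot_sq {γ : ℝ} (hγ : 0 < sin γ) : √(1 + cot γ ^ 2) = 1 / sin γ := by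
  rw [cot_eq_cos_div_sin, sqrt_eq_iff_mul_self_eq_of_pos (by positivity)]
  field_simp
  nlinarith [sin_sq_add_cos_sq γ]

theorem sign_neg_cot {γ : ℝ} (h0 : 0 < γ) (hπ : γ < π) :
    Real.sign (-cot γ) = Real.sign (γ - π / 2) := by
  have hsin : 0 < sin γ := sin_pos_of_pos_of_lt_pi h0 hπ
  rw [cot_eq_cos_div_sin]
  rcases lt_trichotomy γ (π / 2) with h | rfl | h
  · have : 0 < cos γ := cos_pos_of_mem_Ioo ⟨by linarith, h⟩
    rw [Real.sign_of_neg (by rw [neg_lt_zero]; positivity), Real.sign_of_neg (by linarith)]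
  · simp
  · have : cos γ < 0 := cos_neg_of_pi_div_two_lt_of_lt h (by linarith)
    rw [Real.sign_of_pos (by rw [neg_pos]; exact div_neg_of_neg_of_pos this hsin),
      Real.sign_of_pos (by linarith)]

theorem mul_cosh_eq_and_sinh_eq_iff {y s k a b : ℝ} (ha : 0 < a) :
    a * cosh ((y - b) / a) = s ∧ sinh ((y - b) / a) = k ↔
      a = s / √(1 + k ^ 2) ∧ b = y - a * arsinh k := by
  have hsqrt : 0 < √(1 + k ^ 2) := by positivity
  constructor
  · rintro ⟨hcosh, rfl⟩
    rw [arsinh_sinh, ← cosh_arsinh, arsinh_sinh, ← hcosh]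
    constructor
    · field_simp
    · field_simp; ring
  · rintro ⟨ha', rfl⟩
    have ht : (y - (y - a * arsinh k)) / a = arsinh k := by
      rw [sub_sub_cancel, mul_div_cancel_left₀ _ ha.ne']
    rw [ht, cosh_arsinh, sinh_arsinh, ha', div_mul_cancel₀ _ hsqrt.ne']
    exact ⟨rfl, rfl⟩

/-- For `β ∈ (0, π)` and `α ∈ (0, π − β)` there exist unique `a > 0` and `b ∈ ℝ` such that
the catenary `x = a·cosh((y − b)/a)` meets the unit circle at latitude `β` with inward
angle `α`; moreover `a = sin β · sin(α + β)` and
`b = cos β − sgn(α + β − π/2) · sin β · sin(α + β) · arcosh(1/sin(α + β))`. -/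
theorem catenoid_entry_exists_unique (β α : ℝ)
    (hβ : β ∈ Set.Ioo 0 π) (hα : α ∈ Set.Ioo 0 (π - β)) :
    ∃ a b : ℝ,
      (0 < a ∧
        a * Real.cosh ((Real.cos β - b) / a) = Real.sin β ∧
        Real.sinh ((Real.cos β - b) / a) = -Real.cot (α + β)) ∧
      (∀ a' b' : ℝ, 0 < a' →
        a' * Real.cosh ((Real.cos β - b') / a') = Real.sin β →
        Real.sinh ((Real.cos β - b') / a') = -Real.cot (α + β) →
        a' = a ∧ b' = b) ∧
      a = Real.sin β * Real.sin (α + β) ∧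
      b = Real.cos β -
        Real.sign (α + β - π / 2) * Real.sin β * Real.sin (α + β) *
          _root_.arcosh (1 / Real.sin (α + β)) := by
  obtain ⟨hβ0, hβπ⟩ := hβ
  obtain ⟨hα0, hαπ⟩ := hα
  have hγ0 : 0 < α + β := by linarith
  have hγπ : α + β < π := by linarith
  have hsinγ : 0 < sin (α + β) := sin_pos_of_pos_of_lt_pi hγ0 hγπ
  have ha : sin β / √(1 + (-cot (α + β)) ^ 2) = sin β * sin (α + β) := by
    rw [neg_sq, sqrt_one_add_cot_sq hsinγ, div_div_eq_mul_div, div_one]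
  have hapos : 0 < sin β * sin (α + β) := mul_pos (sin_pos_of_pos_of_lt_pi hβ0 hβπ) hsinγ
  have ht : arsinh (-cot (α + β)) =
      Real.sign (α + β - π / 2) * _root_.arcosh (1 / sin (α + β)) := by
    rw [arsinh_eq_sign_mul_arcosh, neg_sq, sqrt_one_add_cot_sq hsinγ, sign_neg_cot hγ0 hγπ]
  refine ⟨_, _, ⟨hapos, (mul_cosh_eq_and_sinh_eq_iff hapos).2 ⟨ha.symm, rfl⟩⟩,
    fun a' b' ha' hcosh hsinh => ?_, rfl, by rw [ht]; ring⟩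
  obtain ⟨rfl, rfl⟩ := (mul_cosh_eq_and_sinh_eq_iff ha').1 ⟨hcosh, hsinh⟩
  exact ⟨ha, by rw [ha]⟩
end

section
/- Let a > 0, b ∈ ℝ, β ∈ (0, π/2] and α ∈ (0, β). If a·cosh((cos β − b)/a) = sin β and sinh((cos β − b)/a) = −cot(β − α), then a = sin β · sin(β − α) and b = cos β + sin β · sin(β − α) · arcosh(1/sin(β − α)). -/
open Real

/-! Writing `γ = β - α` and `t = (cos β - b)/a`, the identity `cosh² t = 1 + sinh² t = 1 + cot² γ`
gives `cosh t = 1 / sin γ`, so the first equation reads `a = sin β sin γ`. Since `cot γ > 0`,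
`t` is negative, hence `t = -arcosh (1 / sin γ)`, which is the formula for `b`. -/

lemma arcosh_eq_real_arcosh : _root_.arcosh = Real.arcosh := rfl

lemma cosh_eq_one_div_sin_of_sinh_eq_neg_cot {t γ : ℝ} (hγ : 0 < sin γ)
    (h : sinh t = -cot γ) : cosh t = 1 / sin γ := by
  have hsq : cosh t ^ 2 = (1 / sin γ) ^ 2 := by
    rw [cosh_sq', h, cot_eq_cos_div_sin]
    field_simp
    linarith [sin_sq_add_cos_sq γ]
  exact (pow_left_inj₀ (cosh_pos t).le (by positivity) two_ne_zero).1 hsq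

lemma eq_neg_arcosh_one_div_sin_of_sinh_eq_neg_cot {t γ : ℝ} (hγ : γ ∈ Set.Ioo 0 (π / 2))
    (h : sinh t = -cot γ) : t = -Real.arcosh (1 / sin γ) := by
  have hsin : 0 < sin γ := sin_pos_of_pos_of_lt_pi hγ.1 (by linarith [hγ.2, pi_pos])
  have hcos : 0 < cos γ := cos_pos_of_mem_Ioo ⟨by linarith [hγ.1, pi_pos], hγ.2⟩
  have ht : t < 0 := by
    rw [← sinh_neg_iff, h, cot_eq_cos_div_sin, neg_lt_zero]
    positivity
  rw [← cosh_eq_one_div_sin_of_sinh_eq_neg_cot hsin h, ← cosh_neg, Real.arcosh_cosh (by linarith),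
    neg_neg]

/-- If the catenary `x = a·cosh((y − b)/a)` meets the unit circle at latitude
`β ∈ (0, π/2]` with outward angle `α ∈ (0, β)`, then `a = sin β · sin(β − α)` and
`b = cos β + sin β · sin(β − α) · arcosh(1/sin(β − α))`. -/
theorem catenoid_exit_formulas (a b β α : ℝ) (ha : 0 < a)
    (hβ : β ∈ Set.Ioc 0 (π / 2)) (hα : α ∈ Set.Ioo 0 β)
    (h1 : a * Real.cosh ((Real.cos β - b) / a) = Real.sin β)
    (h2 : Real.sinh ((Real.cos β - b) / a) = -Real.cot (β - α)) :
    a = Real.sin β * Real.sin (β - α) ∧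
      b = Real.cos β +
        Real.sin β * Real.sin (β - α) * _root_.arcosh (1 / Real.sin (β - α)) := by
  have hγ : β - α ∈ Set.Ioo 0 (π / 2) := ⟨by linarith [hα.2], by linarith [hα.1, hβ.2]⟩
  have hsin : 0 < sin (β - α) := sin_pos_of_pos_of_lt_pi hγ.1 (by linarith [hγ.2, pi_pos])
  rw [cosh_eq_one_div_sin_of_sinh_eq_neg_cot hsin h2, mul_one_div, div_eq_iff hsin.ne'] at h1
  have ht := eq_neg_arcosh_one_div_sin_of_sinh_eq_neg_cot hγ h2
  rw [div_eq_iff ha.ne'] at ht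
  refine ⟨h1, ?_⟩
  rw [arcosh_eq_real_arcosh, ← h1]
  linarith
end

section
/- Let y₁ < y₂ be real numbers with cosh(y₁) < cosh(y₂), and set P₁ = (cosh y₁, y₁), P₂ = (cosh y₂, y₂) in ℝ², with unit tangent vectors v₁ = (sinh y₁, 1)/cosh y₁ and v₂ = (sinh y₂, 1)/cosh y₂ to the standard catenary x = cosh y. Then cosh(y₁)·cosh(y₂)·(⟨P₂ − P₁, v₂⟩ − ⟨P₂ − P₁, v₁⟩) = (cosh y₂ − cosh y₁)·(sinh(y₂ − y₁) − (y₂ − y₁)) > 0; in particular ⟨P₂ − P₁, v₂⟩ > ⟨P₂ − P₁, v₁⟩, so the angle between the chord P₂ − P₁ and the tangent at P₁ is strictly greater than the angle between the chord and the tangent at P₂. -/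
/-
Clearing the denominators `cosh yᵢ`, the tangent at `y` pairs with the chord to
`(cosh y₂ - cosh y₁) sinh y + (y₂ - y₁)`. Taking the difference at `y₂` and `y₁` and using
`sinh (y₂ - y₁) = sinh y₂ cosh y₁ - cosh y₂ sinh y₁` gives the identity; its right side is
positive because `sinh t > t` for `t > 0`.
-/

open Real

/-- The Euclidean inner product on `ℝ × ℝ`. -/
def dot2 (u v : ℝ × ℝ) : ℝ := u.1 * v.1 + u.2 * v.2

lemma cosh_mul_dot2_chord_tangent (y₁ y₂ y : ℝ) :
    cosh y * dot2 ((cosh y₂, y₂) - (cosh y₁, y₁)) (sinh y / cosh y, 1 / cosh y) =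
      (cosh y₂ - cosh y₁) * sinh y + (y₂ - y₁) := by
  have := (cosh_pos y).ne'
  simp only [dot2, Prod.fst_sub, Prod.snd_sub]
  field_simp

lemma cosh_mul_cosh_mul_dot2_chord_tangent_sub (y₁ y₂ : ℝ) :
    cosh y₁ * cosh y₂ *
        (dot2 ((cosh y₂, y₂) - (cosh y₁, y₁)) (sinh y₂ / cosh y₂, 1 / cosh y₂) -
          dot2 ((cosh y₂, y₂) - (cosh y₁, y₁)) (sinh y₁ / cosh y₁, 1 / cosh y₁)) =
      (cosh y₂ - cosh y₁) * (sinh (y₂ - y₁) - (y₂ - y₁)) := by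
  have h₁ := cosh_mul_dot2_chord_tangent y₁ y₂ y₁
  have h₂ := cosh_mul_dot2_chord_tangent y₁ y₂ y₂
  rw [sinh_sub]
  linear_combination cosh y₁ * h₂ - cosh y₂ * h₁

lemma sub_lt_sinh_sub {y₁ y₂ : ℝ} (hy : y₁ < y₂) : y₂ - y₁ < sinh (y₂ - y₁) :=
  self_lt_sinh_iff.mpr (sub_pos.mpr hy)

/-- Chord–tangent angle comparison along the standard catenary `x = cosh y`: for points
`P₁ = (cosh y₁, y₁)`, `P₂ = (cosh y₂, y₂)` with `y₁ < y₂`, `cosh y₁ < cosh y₂`, and unit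
tangents `vᵢ = (sinh yᵢ, 1)/cosh yᵢ`, one has
`cosh y₁ · cosh y₂ · (⟨P₂ − P₁, v₂⟩ − ⟨P₂ − P₁, v₁⟩)
  = (cosh y₂ − cosh y₁)·(sinh(y₂ − y₁) − (y₂ − y₁)) > 0`,
so in particular `⟨P₂ − P₁, v₁⟩ < ⟨P₂ − P₁, v₂⟩`. -/
theorem catenary_chord_tangent_comparison (y₁ y₂ : ℝ) (hy : y₁ < y₂)
    (hc : Real.cosh y₁ < Real.cosh y₂) :
    Real.cosh y₁ * Real.cosh y₂ *
        (dot2 ((Real.cosh y₂, y₂) - (Real.cosh y₁, y₁))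
            (Real.sinh y₂ / Real.cosh y₂, 1 / Real.cosh y₂) -
          dot2 ((Real.cosh y₂, y₂) - (Real.cosh y₁, y₁))
            (Real.sinh y₁ / Real.cosh y₁, 1 / Real.cosh y₁)) =
      (Real.cosh y₂ - Real.cosh y₁) * (Real.sinh (y₂ - y₁) - (y₂ - y₁)) ∧
    0 < (Real.cosh y₂ - Real.cosh y₁) * (Real.sinh (y₂ - y₁) - (y₂ - y₁)) ∧
    dot2 ((Real.cosh y₂, y₂) - (Real.cosh y₁, y₁))
        (Real.sinh y₁ / Real.cosh y₁, 1 / Real.cosh y₁) <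
      dot2 ((Real.cosh y₂, y₂) - (Real.cosh y₁, y₁))
        (Real.sinh y₂ / Real.cosh y₂, 1 / Real.cosh y₂) := by
  have hid := cosh_mul_cosh_mul_dot2_chord_tangent_sub y₁ y₂
  have hpos : 0 < (cosh y₂ - cosh y₁) * (sinh (y₂ - y₁) - (y₂ - y₁)) :=
    mul_pos (sub_pos.mpr hc) (sub_pos.mpr (sub_lt_sinh_sub hy))
  refine ⟨hid, hpos, sub_pos.mp ?_⟩
  rw [← hid] at hpos
  exact pos_of_mul_pos_right hpos (mul_pos (cosh_pos y₁) (cosh_pos y₂)).le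
end

section
/- Let a > 0, b ∈ ℝ, and let 0 < β_in < β_ex < π, α_in ∈ (0, π/2), α_ex ∈ (0, π/2) with α_in + β_in ∈ (0, π) and β_ex − α_ex ∈ (0, π). Assume: a·cosh((cos β_in − b)/a) = sin β_in and sinh((cos β_in − b)/a) = −cot(α_in + β_in); a·cosh((cos β_ex − b)/a) = sin β_ex and sinh((cos β_ex − b)/a) = −cot(β_ex − α_ex); and (a·cosh((y − b)/a))² + y² ≤ 1 for all y ∈ [cos β_ex, cos β_in]. Then β_ex < β_in + 2·α_in. -/
/-!
The profile `x = a cosh((y - b)/a)` is a strictly convex graph over the `y`-axis, so away from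
the entry point it lies strictly beyond its tangent line there. That tangent line meets the unit
circle at the entry point with angle `αin`, so it is a chord whose other endpoint has latitude
`βin + 2 αin`. If the exit latitude `βex` were at least that, the height of this endpoint would lie
in the range of the arc, where the catenary stays in the disk, yet the catenary passes strictly
outside the endpoint, which is on the circle.
-/

open Real

theorem cosh_add_sinh_mul_lt_cosh_add (u : ℝ) {t : ℝ} (ht : t ≠ 0) :
    cosh u + sinh u * t < cosh (u + t) := by
  have hpos := mul_lt_mul_of_pos_left (add_one_lt_exp ht) (exp_pos u)
  have hneg := mul_lt_mul_of_pos_left (add_one_lt_exp (neg_ne_zero.2 ht)) (exp_pos (-u))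
  rw [cosh_eq, sinh_eq, cosh_eq, neg_add, exp_add, exp_add]
  linarith

theorem catenary_tangent_lt {a : ℝ} (ha : 0 < a) (b : ℝ) {y₀ y : ℝ} (hy : y ≠ y₀) :
    a * cosh ((y₀ - b) / a) + sinh ((y₀ - b) / a) * (y - y₀) < a * cosh ((y - b) / a) := by
  have key := cosh_add_sinh_mul_lt_cosh_add ((y₀ - b) / a)
    (div_ne_zero (sub_ne_zero.2 hy) ha.ne')
  rw [← add_div, sub_add_sub_cancel'] at key
  calc a * cosh ((y₀ - b) / a) + sinh ((y₀ - b) / a) * (y - y₀)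
      = a * (cosh ((y₀ - b) / a) + sinh ((y₀ - b) / a) * ((y - y₀) / a)) := by
        field_simp
    _ < a * cosh ((y - b) / a) := mul_lt_mul_of_pos_left key ha

theorem sin_sub_cot_mul_cos_sub_cos {α β : ℝ} (h : sin (α + β) ≠ 0) :
    sin β - cot (α + β) * (cos (β + 2 * α) - cos β) = sin (β + 2 * α) := by
  obtain ⟨γ, rfl⟩ : ∃ γ, β = γ - α := ⟨α + β, by ring⟩
  rw [show α + (γ - α) = γ by ring, show γ - α + 2 * α = γ + α by ring] at *
  rw [cot_eq_cos_div_sin]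
  field_simp
  simp only [sin_add, sin_sub, cos_add, cos_sub]
  ring

theorem sin_lt_catenary_at_chord_end {a b α β : ℝ} (ha : 0 < a) (hβ : 0 < β) (hα : 0 < α)
    (hπ : β + 2 * α ≤ π) (hsin : sin (α + β) ≠ 0)
    (hpoint : a * cosh ((cos β - b) / a) = sin β)
    (hslope : sinh ((cos β - b) / a) = -cot (α + β)) :
    sin (β + 2 * α) < a * cosh ((cos (β + 2 * α) - b) / a) := by
  have hcos : cos (β + 2 * α) ≠ cos β :=
    (cos_lt_cos_of_nonneg_of_le_pi hβ.le hπ (by linarith)).ne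
  calc sin (β + 2 * α) = sin β - cot (α + β) * (cos (β + 2 * α) - cos β) :=
        (sin_sub_cot_mul_cos_sub_cos hsin).symm
    _ = a * cosh ((cos β - b) / a) + sinh ((cos β - b) / a) * (cos (β + 2 * α) - cos β) := by
        rw [hpoint, hslope]; ring
    _ < a * cosh ((cos (β + 2 * α) - b) / a) := catenary_tangent_lt ha b hcos

theorem catenary_exit_latitude_bound_general (a b βin βex αin : ℝ) (ha : 0 < a)
    (h1 : 0 < βin) (h3 : βex < π)
    (hαin : αin ∈ Set.Ioo 0 (π / 2))
    (hin0 : αin + βin ∈ Set.Ioo 0 π)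
    (hin1 : a * Real.cosh ((Real.cos βin - b) / a) = Real.sin βin)
    (hin2 : Real.sinh ((Real.cos βin - b) / a) = -Real.cot (αin + βin))
    (hdisk : ∀ y ∈ Set.Icc (Real.cos βex) (Real.cos βin),
      (a * Real.cosh ((y - b) / a)) ^ 2 + y ^ 2 ≤ 1) :
    βex < βin + 2 * αin := by
  by_contra! hge
  have hβθ : βin < βin + 2 * αin := by linarith [hαin.1]
  have hθπ : βin + 2 * αin < π := hge.trans_lt h3
  have hbeyond := sin_lt_catenary_at_chord_end ha h1 hαin.1 hθπ.le
    (sin_pos_of_pos_of_lt_pi hin0.1 hin0.2).ne' hin1 hin2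
  have hinside := hdisk (cos (βin + 2 * αin))
    ⟨cos_le_cos_of_nonneg_of_le_pi (h1.trans hβθ).le h3.le hge,
      cos_le_cos_of_nonneg_of_le_pi h1.le hθπ.le hβθ.le⟩
  have hsin : 0 ≤ sin (βin + 2 * αin) := sin_nonneg_of_nonneg_of_le_pi (h1.trans hβθ).le hθπ.le
  nlinarith [sin_sq_add_cos_sq (βin + 2 * αin), pow_lt_pow_left₀ hbeyond hsin two_ne_zero]

/-- If the catenary `x = a·cosh((y − b)/a)` enters the unit circle at latitude `βin` with
inward angle `αin`, exits at latitude `βex` with outward angle `αex`, and the arc between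
lies in the closed unit disk, then `βex < βin + 2·αin`. -/
theorem catenary_exit_latitude_bound (a b βin βex αin αex : ℝ) (ha : 0 < a)
    (h1 : 0 < βin) (h2 : βin < βex) (h3 : βex < π)
    (hαin : αin ∈ Set.Ioo 0 (π / 2)) (hαex : αex ∈ Set.Ioo 0 (π / 2))
    (hin0 : αin + βin ∈ Set.Ioo 0 π) (hex0 : βex - αex ∈ Set.Ioo 0 π)
    (hin1 : a * Real.cosh ((Real.cos βin - b) / a) = Real.sin βin)
    (hin2 : Real.sinh ((Real.cos βin - b) / a) = -Real.cot (αin + βin))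
    (hex1 : a * Real.cosh ((Real.cos βex - b) / a) = Real.sin βex)
    (hex2 : Real.sinh ((Real.cos βex - b) / a) = -Real.cot (βex - αex))
    (hdisk : ∀ y ∈ Set.Icc (Real.cos βex) (Real.cos βin),
      (a * Real.cosh ((y - b) / a)) ^ 2 + y ^ 2 ≤ 1) :
    βex < βin + 2 * αin :=
  catenary_exit_latitude_bound_general a b βin βex αin ha h1 h3 hαin hin0 hin1 hin2 hdisk
end

section
/- For i = 1, 2 let 0 < βⁱ_in < βⁱ_ex < π and let vⁱ : [βⁱ_in, βⁱ_ex] → ℝ be differentiable, strictly decreasing, satisfy the polar catenary equation (vⁱ)'(β) = −cot(β)·vⁱ(β)·(vⁱ(β)² + 1) − 2·(vⁱ(β)² + 1) on [βⁱ_in, βⁱ_ex], satisfy vⁱ(βⁱ_in) > 0 > vⁱ(βⁱ_ex), and satisfy ∫_{βⁱ_in}^{βⁱ_ex} vⁱ(β) dβ = 0. If either (β¹_in < β²_in and v¹(β¹_in) = v²(β²_in)) or (β¹_in = β²_in and v¹(β¹_in) < v²(β²_in)), then β¹_ex < β²_ex and v¹(β¹_ex) > v²(β²_ex). -/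
/-!
Write the equation as `v' = -(v² + 1) (v cot β + 2)`. Along a strictly decreasing solution the
factor `v cot β + 2` is positive: it is nonnegative since `v' ≤ 0`, and at a zero its derivative
`-v / sin² β` has the wrong sign for a minimum. Two solutions cannot cross (their difference
solves a linear equation), so `v₂`, which enters above the graph of `v₁`, stays above it.

Suppose the exit value of `v₂` were not below that of `v₁`. Let `c` be the point where `v₂`
takes the entry value of `v₁`. Then `φ = v₁⁻¹ ∘ v₂` maps `[c, β²_ex]` into the first arc, with
`φ(β) < β` and `φ' = (v₂ cot β + 2) / (v₂ cot φ + 2)`. As `cot` decreases, `v₂ φ' ≤ v₂`, strictly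
at the exit, and the substitution `u = φ(β)` gives `∫_{β¹_in}^{φ(β²_ex)} v₁ < ∫_c^{β²_ex} v₂`.
The zero-mean conditions make the left side nonnegative and the right side nonpositive.
Finally, if `β²_ex ≤ β¹_ex` then `v₁(β²_ex) < v₂(β²_ex) < v₁(β¹_ex)`, against the monotonicity
of `v₁`.
-/

open Real Set MeasureTheory

theorem IsCompact.continuousOn_image_of_leftInvOn {X Y : Type*} [TopologicalSpace X]
    [TopologicalSpace Y] [T2Space Y] {f : X → Y} {g : Y → X} {s : Set X} (hs : IsCompact s)
    (hf : ContinuousOn f s) (hleft : LeftInvOn g f s) : ContinuousOn g (f '' s) := by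
  refine continuousOn_iff_isClosed.2 fun t ht => ⟨f '' (t ∩ s), ?_, ?_⟩
  · exact ((hs.inter_left ht).image_of_continuousOn (hf.mono inter_subset_right)).isClosed
  · rw [inter_eq_self_of_subset_left (image_mono inter_subset_right), hleft.image_inter']

theorem IsLocalMinOn.sub_mul_hasDerivWithinAt_nonneg {f : ℝ → ℝ} {s : Set ℝ} {x y f' : ℝ}
    (h : IsLocalMinOn f s x) (hf : HasDerivWithinAt f f' s x) (hs : Convex ℝ s) (hx : x ∈ s)
    (hy : y ∈ s) : 0 ≤ (y - x) * f' := by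
  simpa using h.hasFDerivWithinAt_nonneg hf.hasFDerivWithinAt
    (sub_mem_posTangentConeAt_of_segment_subset (hs.segment_subset hx hy))

theorem Real.hasDerivAt_cot {x : ℝ} (hx : sin x ≠ 0) : HasDerivAt cot (-1 / sin x ^ 2) x := by
  have h := (hasDerivAt_cos x).div (hasDerivAt_sin x) hx
  rw [show cos / sin = cot from funext fun y => (cot_eq_cos_div_sin y).symm] at h
  rwa [show -sin x * sin x - cos x * cos x = -1 by linear_combination -sin_sq_add_cos_sq x] at h

theorem Real.continuousOn_cot : ContinuousOn cot (Ioo 0 π) := fun _ hx =>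
  (hasDerivAt_cot (sin_pos_of_pos_of_lt_pi hx.1 hx.2).ne').continuousAt.continuousWithinAt

theorem Real.strictAntiOn_cot : StrictAntiOn cot (Ioo 0 π) := by
  refine strictAntiOn_of_deriv_neg (convex_Ioo 0 π) continuousOn_cot fun x hx => ?_
  rw [interior_Ioo] at hx
  have hsin := sin_pos_of_pos_of_lt_pi hx.1 hx.2
  rw [(hasDerivAt_cot hsin.ne').deriv]
  exact div_neg_of_neg_of_pos (by norm_num) (by positivity)

theorem pos_of_hasDerivWithinAt_eq_mul_self {w Q : ℝ → ℝ} {a b : ℝ}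
    (hQ : ContinuousOn Q (Icc a b))
    (hw : ∀ x ∈ Icc a b, HasDerivWithinAt w (Q x * w x) (Icc a b) x) (ha : 0 < w a) :
    ∀ x ∈ Icc a b, 0 < w x := by
  obtain ⟨L, hL⟩ := isCompact_Icc.exists_bound_of_continuousOn hQ
  have hwc : ContinuousOn w (Icc a b) := fun x hx => (hw x hx).continuousWithinAt
  intro x hx
  by_contra! hwx
  obtain ⟨z, hz, hwz⟩ : ∃ z ∈ Icc a x, w z = 0 :=
    intermediate_value_Icc' hx.1 (hwc.mono (Icc_subset_Icc_right hx.2)) ⟨hwx, ha.le⟩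
  -- by backward uniqueness for `w' = Q w`, a zero at `z` forces `w = 0` on `[a, z]`
  have hza : Icc a z ⊆ Icc a b := Icc_subset_Icc_right (hz.2.trans hx.2)
  have hlip : ∀ t ∈ Ioc a z, LipschitzOnWith L.toNNReal (fun y => Q t * y) univ :=
    fun t ht => LipschitzWith.lipschitzOnWith <| LipschitzWith.of_dist_le_mul fun y₁ y₂ => by
      rw [dist_eq, dist_eq, ← mul_sub, abs_mul, coe_toNNReal']
      gcongr
      exact (norm_eq_abs (Q t) ▸ hL t (hza (Ioc_subset_Icc_self ht))).trans (le_max_left _ _)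
  have hderiv : ∀ t ∈ Ioc a z, HasDerivWithinAt w (Q t * w t) (Iic t) t := fun t ht =>
    (hw t (hza (Ioc_subset_Icc_self ht))).mono_of_mem_nhdsWithin
      (Icc_mem_nhdsLE_of_mem ⟨ht.1, ht.2.trans (hz.2.trans hx.2)⟩)
  have hzero := ODE_solution_unique_of_mem_Icc_left hlip (hwc.mono hza) hderiv
    (fun _ _ => mem_univ _) continuousOn_const
    (fun t _ => by simpa using hasDerivWithinAt_const t (Iic t) (0 : ℝ))
    (fun _ _ => mem_univ _) hwz (left_mem_Icc.2 hz.1)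
  simp only at hzero
  linarith

theorem integral_left_nonneg_of_integral_eq_zero {f : ℝ → ℝ} {a b c : ℝ} (hc : c ∈ Icc a b)
    (hf : IntervalIntegrable f volume a b) (h0 : ∫ x in a..b, f x = 0)
    (hneg : ∀ x ∈ Icc c b, f x ≤ 0) : 0 ≤ ∫ x in a..c, f x := by
  have hsplit := intervalIntegral.integral_add_adjacent_intervals
    (hf.mono_set (uIcc_subset_uIcc_left (mem_uIcc_of_le hc.1 hc.2)))
    (hf.mono_set (uIcc_subset_uIcc_right (mem_uIcc_of_le hc.1 hc.2)))
  have := intervalIntegral.integral_nonneg (μ := volume) hc.2 fun x hx => neg_nonneg.2 (hneg x hx)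
  rw [intervalIntegral.integral_neg] at this
  linarith

theorem integral_right_nonpos_of_integral_eq_zero {f : ℝ → ℝ} {a b c : ℝ} (hc : c ∈ Icc a b)
    (hf : IntervalIntegrable f volume a b) (h0 : ∫ x in a..b, f x = 0)
    (hpos : ∀ x ∈ Icc a c, 0 ≤ f x) : ∫ x in c..b, f x ≤ 0 := by
  have hsplit := intervalIntegral.integral_add_adjacent_intervals
    (hf.mono_set (uIcc_subset_uIcc_left (mem_uIcc_of_le hc.1 hc.2)))
    (hf.mono_set (uIcc_subset_uIcc_right (mem_uIcc_of_le hc.1 hc.2)))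
  have := intervalIntegral.integral_nonneg (μ := volume) hc.1 fun x hx => hpos x hx
  linarith

theorem exists_reparam_of_strictAntiOn {f₁ f₂ f₁' f₂' : ℝ → ℝ} {a b c e : ℝ} (hab : a ≤ b)
    (hf₁ : ∀ x ∈ Icc a b, HasDerivWithinAt f₁ (f₁' x) (Icc a b) x)
    (hf₁' : ∀ x ∈ Ioo a b, f₁' x ≠ 0) (hm₁ : StrictAntiOn f₁ (Icc a b))
    (hf₂ : ∀ x ∈ Icc c e, HasDerivWithinAt f₂ (f₂' x) (Icc c e) x)
    (hmaps : MapsTo f₂ (Icc c e) (Icc (f₁ b) (f₁ a)))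
    (hmaps' : MapsTo f₂ (Ioo c e) (Ioo (f₁ b) (f₁ a))) :
    ∃ φ : ℝ → ℝ, MapsTo φ (Icc c e) (Icc a b) ∧ (∀ x ∈ Icc c e, f₁ (φ x) = f₂ x) ∧
      ContinuousOn φ (Icc c e) ∧ ∀ x ∈ Ioo c e, HasDerivAt φ (f₂' x / f₁' (φ x)) x := by
  have hc₁ : ContinuousOn f₁ (Icc a b) := fun x hx => (hf₁ x hx).continuousWithinAt
  have hc₂ : ContinuousOn f₂ (Icc c e) := fun x hx => (hf₂ x hx).continuousWithinAt
  have hsurj : SurjOn f₁ (Icc a b) (Icc (f₁ b) (f₁ a)) := intermediate_value_Icc' hab hc₁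
  set ψ := Function.invFunOn f₁ (Icc a b)
  have hψ_cont : ContinuousOn ψ (Icc (f₁ b) (f₁ a)) :=
    (isCompact_Icc.continuousOn_image_of_leftInvOn hc₁ hm₁.injOn.leftInvOn_invFunOn).mono hsurj
  refine ⟨ψ ∘ f₂, hsurj.mapsTo_invFunOn.comp hmaps,
    fun x hx => hsurj.rightInvOn_invFunOn (hmaps hx), hψ_cont.comp hc₂ hmaps, fun x hx => ?_⟩
  have hy := hmaps' hx
  have hψy : ψ (f₂ x) ∈ Ioo a b := by
    have hmem := hsurj.mapsTo_invFunOn (Ioo_subset_Icc_self hy)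
    have hval : f₁ (ψ (f₂ x)) = f₂ x := hsurj.rightInvOn_invFunOn (Ioo_subset_Icc_self hy)
    exact ⟨hmem.1.lt_of_ne fun h => hy.2.ne (hval ▸ h ▸ rfl),
      hmem.2.lt_of_ne fun h => hy.1.ne' (hval ▸ h ▸ rfl)⟩
  have hd₁ : HasDerivAt f₁ (f₁' (ψ (f₂ x))) (ψ (f₂ x)) :=
    (hf₁ _ (Ioo_subset_Icc_self hψy)).hasDerivAt (Icc_mem_nhds hψy.1 hψy.2)
  have hψd : HasDerivAt ψ (f₁' (ψ (f₂ x)))⁻¹ (f₂ x) :=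
    hd₁.of_local_left_inverse (hψ_cont.continuousAt (Icc_mem_nhds hy.1 hy.2)) (hf₁' _ hψy)
      (Filter.mem_of_superset (Icc_mem_nhds hy.1 hy.2) fun _ hz => hsurj.rightInvOn_invFunOn hz)
  have hd₂ : HasDerivAt f₂ (f₂' x) x :=
    (hf₂ x (Ioo_subset_Icc_self hx)).hasDerivAt (Icc_mem_nhds hx.1 hx.2)
  simpa [div_eq_inv_mul] using hψd.comp x hd₂

theorem mul_cot_ratio_lt_self {β γ y : ℝ} (hγ : 0 < γ) (hγβ : γ < β) (hβ : β < π)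
    (hD : 0 < y * cot γ + 2) (hy : y ≠ 0) : y * ((y * cot β + 2) / (y * cot γ + 2)) < y := by
  have hcot : cot β < cot γ :=
    strictAntiOn_cot ⟨hγ, hγβ.trans hβ⟩ ⟨hγ.trans hγβ, hβ⟩ hγβ
  rw [mul_div_assoc', div_lt_iff₀ hD]
  nlinarith [mul_pos (pow_two_pos_of_ne_zero hy) (sub_pos.2 hcot)]

theorem mul_cot_ratio_le_self {β γ y : ℝ} (hγ : 0 < γ) (hγβ : γ < β) (hβ : β < π)
    (hD : 0 < y * cot γ + 2) : y * ((y * cot β + 2) / (y * cot γ + 2)) ≤ y := by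
  rcases eq_or_ne y 0 with rfl | hy
  · simp
  · exact (mul_cot_ratio_lt_self hγ hγβ hβ hD hy).le

noncomputable def polarCatenaryRHS (β y : ℝ) : ℝ := -cot β * y * (y ^ 2 + 1) - 2 * (y ^ 2 + 1)

def IsPolarCatenaryOn (v : ℝ → ℝ) (s : Set ℝ) : Prop :=
  ∀ β ∈ s, HasDerivWithinAt v (polarCatenaryRHS β (v β)) s β

theorem polarCatenaryRHS_eq (β y : ℝ) :
    polarCatenaryRHS β y = -((y ^ 2 + 1) * (y * cot β + 2)) := by
  unfold polarCatenaryRHS; ring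

theorem polarCatenaryRHS_div (β γ y : ℝ) :
    polarCatenaryRHS β y / polarCatenaryRHS γ y = (y * cot β + 2) / (y * cot γ + 2) := by
  rw [polarCatenaryRHS_eq, polarCatenaryRHS_eq, neg_div_neg_eq,
    mul_div_mul_left _ _ (by positivity)]

namespace IsPolarCatenaryOn

variable {v v₁ v₂ : ℝ → ℝ} {s t : Set ℝ} {a b c e : ℝ}

theorem mono (hv : IsPolarCatenaryOn v s) (hts : t ⊆ s) : IsPolarCatenaryOn v t :=
  fun β hβ => (hv β (hts hβ)).mono hts

theorem continuousOn (hv : IsPolarCatenaryOn v s) : ContinuousOn v s :=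
  fun β hβ => (hv β hβ).continuousWithinAt

theorem factor_pos (ha : 0 < a) (hab : a < b) (hb : b < π) (hv : IsPolarCatenaryOn v (Icc a b))
    (hm : StrictAntiOn v (Icc a b)) (hva : 0 < v a) (hvb : v b < 0) :
    ∀ x ∈ Icc a b, 0 < v x * cot x + 2 := by
  have hnonneg : ∀ x ∈ Icc a b, 0 ≤ v x * cot x + 2 := fun x hx => by
    have h := (hv x hx).nonpos_of_antitoneOn ((uniqueDiffOn_Icc hab x hx).accPt) hm.antitoneOn
    rw [polarCatenaryRHS_eq, neg_nonpos] at h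
    exact nonneg_of_mul_nonneg_right h (by positivity)
  intro x hx
  refine (hnonneg x hx).lt_of_ne' fun hzero => ?_
  have hsin : 0 < sin x := sin_pos_of_pos_of_lt_pi (ha.trans_le hx.1) (hx.2.trans_lt hb)
  -- `v' = 0` where the factor vanishes
  have hD : HasDerivWithinAt (fun y => v y * cot y + 2) (-v x / sin x ^ 2) (Icc a b) x :=
    (((hv x hx).mul (hasDerivAt_cot hsin.ne').hasDerivWithinAt).add_const 2).congr_deriv (by
      rw [polarCatenaryRHS_eq, hzero]; ring)
  have hmin : IsLocalMinOn (fun y => v y * cot y + 2) (Icc a b) x :=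
    IsMinOn.localize fun y hy => by simpa [hzero] using hnonneg y hy
  have hleft := hmin.sub_mul_hasDerivWithinAt_nonneg hD (convex_Icc a b) hx (left_mem_Icc.2 hab.le)
  have hright :=
    hmin.sub_mul_hasDerivWithinAt_nonneg hD (convex_Icc a b) hx (right_mem_Icc.2 hab.le)
  rcases lt_trichotomy (v x) 0 with hneg | hzero' | hpos
  · have hp : 0 < -v x / sin x ^ 2 := div_pos (neg_pos.2 hneg) (by positivity)
    have hxa : x = a := le_antisymm (by nlinarith) hx.1
    exact hneg.not_gt (hxa ▸ hva)
  · simp [hzero'] at hzero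
  · have hp : -v x / sin x ^ 2 < 0 := div_neg_of_neg_of_pos (neg_neg_of_pos hpos) (by positivity)
    have hxb : x = b := le_antisymm hx.2 (by nlinarith)
    exact hpos.not_gt (hxb ▸ hvb)

theorem lt_of_lt (ha : 0 < a) (hb : b < π) (h₁ : IsPolarCatenaryOn v₁ (Icc a b))
    (h₂ : IsPolarCatenaryOn v₂ (Icc a b)) (hlt : v₁ a < v₂ a) : ∀ x ∈ Icc a b, v₁ x < v₂ x := by
  have hcot : ContinuousOn cot (Icc a b) := continuousOn_cot.mono (Icc_subset_Ioo ha hb)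
  have hc₁ := h₁.continuousOn
  have hc₂ := h₂.continuousOn
  have hQ : ContinuousOn
      (fun x => -(cot x * (v₂ x ^ 2 + v₁ x * v₂ x + v₁ x ^ 2 + 1) + 2 * (v₁ x + v₂ x)))
      (Icc a b) := by fun_prop
  have hw := pos_of_hasDerivWithinAt_eq_mul_self hQ (w := v₂ - v₁)
    (fun x hx => ((h₂ x hx).sub (h₁ x hx)).congr_deriv <| by
      simp only [polarCatenaryRHS, Pi.sub_apply]; ring) (sub_pos.2 hlt)
  exact fun x hx => sub_pos.1 (hw x hx)

theorem exists_integral_lt_integral (ha : 0 < a) (hab : a ≤ b) (hb : b < π)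
    (h₁ : IsPolarCatenaryOn v₁ (Icc a b)) (hm₁ : StrictAntiOn v₁ (Icc a b))
    (hD₁ : ∀ x ∈ Icc a b, 0 < v₁ x * cot x + 2) (hac : a ≤ c) (hce : c < e) (he : e < π)
    (h₂ : IsPolarCatenaryOn v₂ (Icc c e)) (hm₂ : StrictAntiOn v₂ (Icc c e))
    (hvc : v₂ c = v₁ a) (hve : v₁ b ≤ v₂ e) (hve₀ : v₂ e ≠ 0)
    (hlt : ∀ x ∈ Icc c e, x ≤ b → v₁ x < v₂ x) :
    ∃ d ∈ Icc a b, v₁ d = v₂ e ∧ ∫ x in a..d, v₁ x < ∫ x in c..e, v₂ x := by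
  have hcIcc := left_mem_Icc.2 hce.le
  have heIcc := right_mem_Icc.2 hce.le
  have hmaps : MapsTo v₂ (Icc c e) (Icc (v₁ b) (v₁ a)) := fun x hx =>
    ⟨hve.trans (hm₂.antitoneOn hx heIcc hx.2), hvc ▸ hm₂.antitoneOn hcIcc hx hx.1⟩
  have hmaps' : MapsTo v₂ (Ioo c e) (Ioo (v₁ b) (v₁ a)) := fun x hx =>
    ⟨hve.trans_lt (hm₂ (Ioo_subset_Icc_self hx) heIcc hx.2),
      hvc ▸ hm₂ hcIcc (Ioo_subset_Icc_self hx) hx.1⟩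
  obtain ⟨φ, hφ_maps, hφ_val, hφ_cont, hφ_deriv⟩ := exists_reparam_of_strictAntiOn hab h₁
    (fun x hx => by
      rw [polarCatenaryRHS_eq]
      exact neg_ne_zero.2 (mul_pos (by positivity) (hD₁ x (Ioo_subset_Icc_self hx))).ne')
    hm₁ h₂ hmaps hmaps'
  have hD₁φ : ∀ x ∈ Icc c e, 0 < v₂ x * cot (φ x) + 2 := fun x hx =>
    hφ_val x hx ▸ hD₁ _ (hφ_maps hx)
  set Φ' := fun x => (v₂ x * cot x + 2) / (v₂ x * cot (φ x) + 2)
  have hderiv : ∀ x ∈ Ioo c e, HasDerivWithinAt φ (Φ' x) (Ioi x) x := fun x hx => by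
    have h := hφ_deriv x hx
    rw [hφ_val x (Ioo_subset_Icc_self hx), polarCatenaryRHS_div] at h
    exact h.hasDerivWithinAt
  have hΦ'_cont : ContinuousOn Φ' (Icc c e) := by
    have hcot : ContinuousOn cot (Icc c e) :=
      continuousOn_cot.mono (Icc_subset_Ioo (ha.trans_le hac) he)
    have hcotφ : ContinuousOn (fun x => cot (φ x)) (Icc c e) :=
      continuousOn_cot.comp hφ_cont fun x hx => Icc_subset_Ioo ha hb (hφ_maps hx)
    exact ((h₂.continuousOn.mul hcot).add continuousOn_const).div
      ((h₂.continuousOn.mul hcotφ).add continuousOn_const) fun x hx => (hD₁φ x hx).ne'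
  have hφc : φ c = a := hm₁.injOn (hφ_maps hcIcc) (left_mem_Icc.2 hab) (by rw [hφ_val c hcIcc, hvc])
  have hφ_lt : ∀ x ∈ Icc c e, φ x < x := fun x hx => by
    by_cases hxb : x ≤ b
    · exact (hm₁.lt_iff_gt ⟨hac.trans hx.1, hxb⟩ (hφ_maps hx)).1 (hφ_val x hx ▸ hlt x hx hxb)
    · exact (hφ_maps hx).2.trans_lt (not_le.1 hxb)
  have hsubst : ∫ x in c..e, v₂ x * Φ' x = ∫ u in a..φ e, v₁ u := by
    rw [← hφc, ← intervalIntegral.integral_comp_mul_deriv'' (by rwa [uIcc_of_le hce.le])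
      (by rwa [min_eq_left hce.le, max_eq_right hce.le]) (by rwa [uIcc_of_le hce.le])
      (h₁.continuousOn.mono (by rw [uIcc_of_le hce.le]; exact image_subset_iff.2 hφ_maps))]
    refine intervalIntegral.integral_congr fun x hx => ?_
    rw [uIcc_of_le hce.le] at hx
    simp only [Function.comp_apply, hφ_val x hx]
  have hle : ∀ x ∈ Icc c e, v₂ x * Φ' x ≤ v₂ x := fun x hx =>
    mul_cot_ratio_le_self (ha.trans_le (hφ_maps hx).1) (hφ_lt x hx) (hx.2.trans_lt he) (hD₁φ x hx)
  have hlt_e : v₂ e * Φ' e < v₂ e := mul_cot_ratio_lt_self (ha.trans_le (hφ_maps heIcc).1)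
    (hφ_lt e heIcc) he (hD₁φ e heIcc) hve₀
  refine ⟨φ e, hφ_maps heIcc, hφ_val e heIcc, hsubst ▸ ?_⟩
  exact intervalIntegral.integral_lt_integral_of_continuousOn_of_le_of_exists_lt hce
    (h₂.continuousOn.mul hΦ'_cont) h₂.continuousOn (fun x hx => hle x (Ioc_subset_Icc_self hx))
    ⟨e, heIcc, hlt_e⟩

theorem exit_value_lt {a₁ b₁ a₂ b₂ : ℝ} (ha₁ : 0 < a₁) (hab₁ : a₁ < b₁) (hb₁ : b₁ < π)
    (hab₂ : a₂ < b₂) (hb₂ : b₂ < π)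
    (h₁ : IsPolarCatenaryOn v₁ (Icc a₁ b₁)) (h₂ : IsPolarCatenaryOn v₂ (Icc a₂ b₂))
    (hm₁ : StrictAntiOn v₁ (Icc a₁ b₁)) (hm₂ : StrictAntiOn v₂ (Icc a₂ b₂))
    (hva₁ : 0 < v₁ a₁) (hvb₁ : v₁ b₁ < 0) (hvb₂ : v₂ b₂ < 0)
    (hi₁ : ∫ x in a₁..b₁, v₁ x = 0) (hi₂ : ∫ x in a₂..b₂, v₂ x = 0)
    (ha : a₁ ≤ a₂) (hva : v₁ a₁ ≤ v₂ a₂) (hlt : ∀ x ∈ Icc a₂ b₂, x ≤ b₁ → v₁ x < v₂ x) :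
    v₂ b₂ < v₁ b₁ := by
  by_contra! hvb
  obtain ⟨c, hc, hvc⟩ : ∃ c ∈ Icc a₂ b₂, v₂ c = v₁ a₁ :=
    intermediate_value_Icc' hab₂.le h₂.continuousOn ⟨by linarith, hva⟩
  have hcb : c < b₂ := hc.2.lt_of_ne (by rintro rfl; linarith)
  have hsub : Icc c b₂ ⊆ Icc a₂ b₂ := Icc_subset_Icc_left hc.1
  obtain ⟨d, hd, hvd, hint⟩ := h₁.exists_integral_lt_integral ha₁ hab₁.le hb₁ hm₁
    (h₁.factor_pos ha₁ hab₁ hb₁ hm₁ hva₁ hvb₁) (ha.trans hc.1) hcb hb₂ (h₂.mono hsub)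
    (hm₂.mono hsub) hvc hvb hvb₂.ne fun x hx => hlt x (hsub hx)
  have hint₁ : 0 ≤ ∫ x in a₁..d, v₁ x :=
    integral_left_nonneg_of_integral_eq_zero hd
      (h₁.continuousOn.intervalIntegrable_of_Icc hab₁.le) hi₁ fun x hx => by
        linarith [hm₁.antitoneOn ⟨hd.1, hx.1.trans hx.2⟩ ⟨hd.1.trans hx.1, hx.2⟩ hx.1]
  have hint₂ : ∫ x in c..b₂, v₂ x ≤ 0 :=
    integral_right_nonpos_of_integral_eq_zero hc
      (h₂.continuousOn.intervalIntegrable_of_Icc hab₂.le) hi₂ fun x hx => by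
        linarith [hm₂.antitoneOn ⟨hx.1, hx.2.trans hc.2⟩ ⟨hc.1, hc.2⟩ hx.2]
  linarith

end IsPolarCatenaryOn

theorem polar_catenary_exit_monotone_general
    (b1in b1ex b2in b2ex : ℝ)
    (h1a : 0 < b1in) (h1b : b1in < b1ex) (h1c : b1ex < π)
    (h2a : 0 < b2in) (h2b : b2in < b2ex) (h2c : b2ex < π)
    (v₁ v₂ : ℝ → ℝ)
    (hd₁ : ∀ β ∈ Set.Icc b1in b1ex,
      HasDerivWithinAt v₁
        (-Real.cot β * v₁ β * (v₁ β ^ 2 + 1) - 2 * (v₁ β ^ 2 + 1))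
        (Set.Icc b1in b1ex) β)
    (hd₂ : ∀ β ∈ Set.Icc b2in b2ex,
      HasDerivWithinAt v₂
        (-Real.cot β * v₂ β * (v₂ β ^ 2 + 1) - 2 * (v₂ β ^ 2 + 1))
        (Set.Icc b2in b2ex) β)
    (hm₁ : StrictAntiOn v₁ (Set.Icc b1in b1ex))
    (hm₂ : StrictAntiOn v₂ (Set.Icc b2in b2ex))
    (hs₁ : 0 < v₁ b1in) (hs₁' : v₁ b1ex < 0)
    (hs₂' : v₂ b2ex < 0)
    (hi₁ : ∫ β in b1in..b1ex, v₁ β = 0)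
    (hi₂ : ∫ β in b2in..b2ex, v₂ β = 0)
    (hcmp : (b1in < b2in ∧ v₁ b1in = v₂ b2in) ∨ (b1in = b2in ∧ v₁ b1in < v₂ b2in)) :
    b1ex < b2ex ∧ v₂ b2ex < v₁ b1ex := by
  have h₁ : IsPolarCatenaryOn v₁ (Icc b1in b1ex) := hd₁
  have h₂ : IsPolarCatenaryOn v₂ (Icc b2in b2ex) := hd₂
  have hin : b1in ≤ b2in ∧ v₁ b1in ≤ v₂ b2in := by
    rcases hcmp with ⟨h, h'⟩ | ⟨h, h'⟩ <;> exact ⟨h.le, h'.le⟩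
  have hstart : b2in ≤ b1ex → v₁ b2in < v₂ b2in := fun h => by
    rcases hcmp with ⟨hlt, heq⟩ | ⟨rfl, hlt⟩
    · exact heq ▸ hm₁ (left_mem_Icc.2 h1b.le) ⟨hlt.le, h⟩ hlt
    · exact hlt
  have hlt : ∀ x ∈ Icc b2in b2ex, x ≤ b1ex → v₁ x < v₂ x := fun x hx hx₁ =>
    IsPolarCatenaryOn.lt_of_lt h2a (hx.2.trans_lt h2c) (h₁.mono (Icc_subset_Icc hin.1 hx₁))
      (h₂.mono (Icc_subset_Icc_right hx.2)) (hstart (hx.1.trans hx₁)) x (right_mem_Icc.2 hx.1)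
  have hval := IsPolarCatenaryOn.exit_value_lt h1a h1b h1c h2b h2c h₁ h₂ hm₁ hm₂ hs₁ hs₁' hs₂'
    hi₁ hi₂ hin.1 hin.2 hlt
  refine ⟨lt_of_not_ge fun hle => ?_, hval⟩
  have := hlt b2ex (right_mem_Icc.2 h2b.le) hle
  linarith [hm₁.antitoneOn ⟨hin.1.trans h2b.le, hle⟩ (right_mem_Icc.2 h1b.le) hle]

/-- ODE form of the monotonicity of the exit data (Proposition 2.7): for two strictly
decreasing solutions of the polar catenary equation on `[βin, βex]` with `v(βin) > 0 >
v(βex)` and `∫ v = 0`, increasing the entry latitude (at equal entry value) or the entry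
value (at equal entry latitude) strictly increases the exit latitude and strictly
decreases the exit value. -/
theorem polar_catenary_exit_monotone
    (b1in b1ex b2in b2ex : ℝ)
    (h1a : 0 < b1in) (h1b : b1in < b1ex) (h1c : b1ex < π)
    (h2a : 0 < b2in) (h2b : b2in < b2ex) (h2c : b2ex < π)
    (v₁ v₂ : ℝ → ℝ)
    (hd₁ : ∀ β ∈ Set.Icc b1in b1ex,
      HasDerivWithinAt v₁
        (-Real.cot β * v₁ β * (v₁ β ^ 2 + 1) - 2 * (v₁ β ^ 2 + 1))
        (Set.Icc b1in b1ex) β)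
    (hd₂ : ∀ β ∈ Set.Icc b2in b2ex,
      HasDerivWithinAt v₂
        (-Real.cot β * v₂ β * (v₂ β ^ 2 + 1) - 2 * (v₂ β ^ 2 + 1))
        (Set.Icc b2in b2ex) β)
    (hm₁ : StrictAntiOn v₁ (Set.Icc b1in b1ex))
    (hm₂ : StrictAntiOn v₂ (Set.Icc b2in b2ex))
    (hs₁ : 0 < v₁ b1in) (hs₁' : v₁ b1ex < 0)
    (hs₂ : 0 < v₂ b2in) (hs₂' : v₂ b2ex < 0)
    (hi₁ : ∫ β in b1in..b1ex, v₁ β = 0)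
    (hi₂ : ∫ β in b2in..b2ex, v₂ β = 0)
    (hcmp : (b1in < b2in ∧ v₁ b1in = v₂ b2in) ∨ (b1in = b2in ∧ v₁ b1in < v₂ b2in)) :
    b1ex < b2ex ∧ v₂ b2ex < v₁ b1ex :=
  polar_catenary_exit_monotone_general b1in b1ex b2in b2ex h1a h1b h1c h2a h2b h2c v₁ v₂ hd₁ hd₂ hm₁
    hm₂ hs₁ hs₁' hs₂' hi₁ hi₂ hcmp
end

section
/- For all real numbers z₁, z₂ with z₂ < z₁ and z₁ − z₂ ≤ 2, one has tanh(z₁) − tanh(z₂) + (z₁ − z₂)·tanh(z₁)·tanh(z₂) > 0. -/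
/-!
If `tanh z₁ · tanh z₂ ≥ 0` the claim is just monotonicity of `tanh`. Otherwise
`tanh z₂ < 0 < tanh z₁`, the expression is decreasing in `z₁ - z₂`, and at `z₁ - z₂ = 2` it equals
`tanh z₁ (1 + tanh z₂) + (-tanh z₂)(1 - tanh z₁)`, positive because `|tanh| < 1`.
-/

open Real

theorem Real.tanh_strictMono : StrictMono tanh := fun x y hxy => by
  rwa [← artanh_lt_artanh_iff ⟨neg_one_lt_tanh x, tanh_lt_one x⟩ ⟨neg_one_lt_tanh y, tanh_lt_one y⟩,
    artanh_tanh, artanh_tanh]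

theorem sub_add_mul_mul_pos {a b d : ℝ} (hb : -1 < b) (ha : a < 1) (hba : b < a)
    (hd₀ : 0 ≤ d) (hd₂ : d ≤ 2) : 0 < a - b + d * a * b := by
  rcases le_or_gt 0 (a * b) with hab | hab
  · nlinarith [mul_nonneg hd₀ hab]
  · have ha₀ : 0 < a := by nlinarith
    have hb₀ : b < 0 := by nlinarith
    calc 0 < a * (1 + b) + -b * (1 - a) :=
          add_pos (mul_pos ha₀ (by linarith)) (mul_pos (neg_pos.2 hb₀) (by linarith))
      _ = a - b + 2 * a * b := by ring
      _ ≤ a - b + d * a * b := by nlinarith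

/-- For `z₂ < z₁` with `z₁ − z₂ ≤ 2`,
`tanh z₁ − tanh z₂ + (z₁ − z₂)·tanh z₁·tanh z₂ > 0`. -/
theorem tanh_dirichlet_determinant_pos (z₁ z₂ : ℝ) (h : z₂ < z₁) (h2 : z₁ - z₂ ≤ 2) :
    0 < Real.tanh z₁ - Real.tanh z₂ + (z₁ - z₂) * Real.tanh z₁ * Real.tanh z₂ :=
  sub_add_mul_mul_pos (neg_one_lt_tanh z₂) (tanh_lt_one z₁) (tanh_strictMono h)
    (sub_nonneg.2 h.le) h2
end

section
/- Let a > 0, b ∈ ℝ, and let y₂ < y₁ be real numbers with y₁ − y₂ ≤ 2a. If u : [y₂, y₁] → ℝ is twice differentiable and satisfies u''(y) + (2/a²)·sech²((y − b)/a)·u(y) = 0 for all y ∈ [y₂, y₁] together with u(y₁) = u(y₂) = 0, then u is identically zero on [y₂, y₁]. -/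
/-!
Comparison with a positive strict supersolution. The potential
`q = (2/a²)·sech²((y - b)/a)` stays below `k² = 9/(4a²)`, and with `m` the midpoint of
`[y₂, y₁]` the function `w = cos (k (y - m))` is positive there because `k·a = 3/2 < π/2`;
hence `w'' + q w = (q - k²) w < 0`. If a solution `u` were positive somewhere, let `μ > 0` be
the maximum of `u / w`, attained at an interior point `c`. Then `v = μ w - u ≥ 0` vanishes at
`c`, so `v''(c) ≥ 0`, whereas `v''(c) = v''(c) + q(c) v(c) = μ (w'' + q w)(c) < 0`.
Applying this to `u` and `-u` gives `u = 0`.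
-/

open Real Set Filter Topology

theorem IsLocalMin.second_deriv_nonneg {f f' : ℝ → ℝ} {c f'' : ℝ}
    (hmin : IsLocalMin f c) (hf : ∀ᶠ x in 𝓝 c, HasDerivAt f (f' x) x)
    (hf' : HasDerivAt f' f'' c) : 0 ≤ f'' := by
  by_contra! hneg
  have hderiv : deriv f =ᶠ[𝓝 c] f' := hf.mono fun x hx => hx.deriv
  have hderiv2 : deriv (deriv f) c = f'' := (hf'.congr_of_eventuallyEq hderiv).deriv
  have hmax : IsLocalMax f c :=
    isLocalMax_of_deriv_deriv_neg (hderiv2 ▸ hneg)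
      (hderiv.eq_of_nhds.trans (hmin.hasDerivAt_eq_zero hf.self_of_nhds))
      hf.self_of_nhds.continuousAt
  -- The library's second derivative test is not strict: it only makes `f` locally constant.
  have hconst : f =ᶠ[𝓝 c] fun _ => f c :=
    (hmin.and hmax).mono fun x hx => le_antisymm hx.2 hx.1
  have : deriv (deriv f) c = 0 := by
    rw [hconst.deriv.deriv_eq]
    simp
  linarith

section MaximumPrinciple

variable {s t : ℝ} {q u u' u'' w w' w'' : ℝ → ℝ}

theorem nonpos_of_subsolution_of_pos_supersolution
    (hu : ∀ y ∈ Icc s t, HasDerivWithinAt u (u' y) (Icc s t) y)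
    (hu' : ∀ y ∈ Icc s t, HasDerivWithinAt u' (u'' y) (Icc s t) y)
    (hw : ∀ y ∈ Icc s t, HasDerivWithinAt w (w' y) (Icc s t) y)
    (hw' : ∀ y ∈ Icc s t, HasDerivWithinAt w' (w'' y) (Icc s t) y)
    (hsub : ∀ y ∈ Icc s t, 0 ≤ u'' y + q y * u y)
    (hsuper : ∀ y ∈ Icc s t, w'' y + q y * w y < 0)
    (hw_pos : ∀ y ∈ Icc s t, 0 < w y) (hs : u s ≤ 0) (ht : u t ≤ 0) :
    ∀ y ∈ Icc s t, u y ≤ 0 := by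
  by_contra! ⟨y₀, hy₀, hu₀⟩
  have hquot : ContinuousOn (fun y => u y / w y) (Icc s t) :=
    (HasDerivWithinAt.continuousOn hu).div (HasDerivWithinAt.continuousOn hw)
      fun y hy => (hw_pos y hy).ne'
  obtain ⟨c, hc, hmax⟩ := isCompact_Icc.exists_isMaxOn ⟨y₀, hy₀⟩ hquot
  set μ := u c / w c
  have hμ : 0 < μ := (div_pos hu₀ (hw_pos y₀ hy₀)).trans_le (hmax hy₀)
  have hμc : μ * w c = u c := div_mul_cancel₀ _ (hw_pos c hc).ne'
  have huc : 0 < u c := hμc ▸ mul_pos hμ (hw_pos c hc)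
  have hcs : s < c := hc.1.lt_of_ne fun h => by linarith [h ▸ huc]
  have hct : c < t := hc.2.lt_of_ne fun h => by linarith [h ▸ huc]
  have hnhds : ∀ y ∈ Ioo s t, Icc s t ∈ 𝓝 y := fun y hy => Icc_mem_nhds hy.1 hy.2
  have hv_min : IsLocalMin (fun y => μ * w y - u y) c := by
    filter_upwards [hnhds c ⟨hcs, hct⟩] with y hy
    have : u y / w y ≤ μ := hmax hy
    rw [div_le_iff₀ (hw_pos y hy)] at this
    linarith
  have hv : ∀ y ∈ Ioo s t, HasDerivAt (fun y => μ * w y - u y) (μ * w' y - u' y) y :=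
    fun y hy => (((hw y (Ioo_subset_Icc_self hy)).const_mul μ).sub
      (hu y (Ioo_subset_Icc_self hy))).hasDerivAt (hnhds y hy)
  have hv' : HasDerivAt (fun y => μ * w' y - u' y) (μ * w'' c - u'' c) c :=
    (((hw' c hc).const_mul μ).sub (hu' c hc)).hasDerivAt (hnhds c ⟨hcs, hct⟩)
  have hv'' := hv_min.second_deriv_nonneg (eventually_of_mem (Ioo_mem_nhds hcs hct) hv) hv'
  have hquc : q c * u c = μ * (q c * w c) := by rw [← hμc]; ring
  linarith [hsub c hc, mul_neg_of_pos_of_neg hμ (hsuper c hc)]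

theorem eq_zero_of_dirichlet_of_pos_supersolution
    (hu : ∀ y ∈ Icc s t, HasDerivWithinAt u (u' y) (Icc s t) y)
    (hu' : ∀ y ∈ Icc s t, HasDerivWithinAt u' (u'' y) (Icc s t) y)
    (hw : ∀ y ∈ Icc s t, HasDerivWithinAt w (w' y) (Icc s t) y)
    (hw' : ∀ y ∈ Icc s t, HasDerivWithinAt w' (w'' y) (Icc s t) y)
    (hode : ∀ y ∈ Icc s t, u'' y + q y * u y = 0)
    (hsuper : ∀ y ∈ Icc s t, w'' y + q y * w y < 0)
    (hw_pos : ∀ y ∈ Icc s t, 0 < w y) (hs : u s = 0) (ht : u t = 0) :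
    ∀ y ∈ Icc s t, u y = 0 := by
  have hle := nonpos_of_subsolution_of_pos_supersolution hu hu' hw hw' (fun y hy => (hode y hy).ge)
    hsuper hw_pos hs.le ht.le
  have hge := nonpos_of_subsolution_of_pos_supersolution (u := fun y => -u y)
    (fun y hy => (hu y hy).neg) (fun y hy => (hu' y hy).neg) hw hw'
    (fun y hy => by linarith [hode y hy]) hsuper hw_pos (by simp [hs]) (by simp [ht])
  exact fun y hy => le_antisymm (hle y hy) (neg_nonpos.mp (hge y hy))

end MaximumPrinciple

theorem hasDerivAt_cos_mul_sub (k m y : ℝ) :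
    HasDerivAt (fun y => cos (k * (y - m))) (-k * sin (k * (y - m))) y := by
  have := (((hasDerivAt_id y).sub_const m).const_mul k).cos
  simp only [id, mul_one] at this
  exact this.congr_deriv (by ring)

theorem hasDerivAt_neg_mul_sin_mul_sub (k m y : ℝ) :
    HasDerivAt (fun y => -k * sin (k * (y - m))) (-k ^ 2 * cos (k * (y - m))) y := by
  have := ((((hasDerivAt_id y).sub_const m).const_mul k).sin).const_mul (-k)
  simp only [id, mul_one] at this
  exact this.congr_deriv (by ring)

theorem cos_mul_sub_pos {k m r y : ℝ} (hk : 0 ≤ k) (hkr : k * r < π / 2) (hy : |y - m| ≤ r) :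
    0 < cos (k * (y - m)) := by
  have : |k * (y - m)| < π / 2 := by
    rw [abs_mul, abs_of_nonneg hk]
    exact (mul_le_mul_of_nonneg_left hy hk).trans_lt hkr
  exact cos_pos_of_mem_Ioo (abs_lt.mp this)

theorem sq_one_div_cosh_le_one (x : ℝ) : (1 / cosh x) ^ 2 ≤ 1 := by
  rw [one_div, inv_pow]
  exact inv_le_one_of_one_le₀ (one_le_pow₀ (one_le_cosh x))

theorem two_div_sq_mul_sech_sq_lt {a : ℝ} (ha : 0 < a) (x : ℝ) :
    2 / a ^ 2 * (1 / cosh x) ^ 2 < (3 / (2 * a)) ^ 2 := calc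
  2 / a ^ 2 * (1 / cosh x) ^ 2 ≤ 2 / a ^ 2 :=
    mul_le_of_le_one_right (by positivity) (sq_one_div_cosh_le_one x)
  _ < 9 / (4 * a ^ 2) := by
    rw [div_lt_div_iff₀ (by positivity) (by positivity)]
    nlinarith [pow_pos ha 2]
  _ = (3 / (2 * a)) ^ 2 := by ring

theorem catenoid_dirichlet_kernel_trivial_general (a b y₁ y₂ : ℝ) (ha : 0 < a)
    (hgap : y₁ - y₂ ≤ 2 * a)
    (u u' u'' : ℝ → ℝ)
    (hu : ∀ y ∈ Set.Icc y₂ y₁, HasDerivWithinAt u (u' y) (Set.Icc y₂ y₁) y)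
    (hu' : ∀ y ∈ Set.Icc y₂ y₁, HasDerivWithinAt u' (u'' y) (Set.Icc y₂ y₁) y)
    (hode : ∀ y ∈ Set.Icc y₂ y₁,
      u'' y + (2 / a ^ 2) * (1 / Real.cosh ((y - b) / a)) ^ 2 * u y = 0)
    (hb1 : u y₁ = 0) (hb2 : u y₂ = 0) :
    ∀ y ∈ Set.Icc y₂ y₁, u y = 0 := by
  set k := 3 / (2 * a) with hk
  set m := (y₂ + y₁) / 2 with hm
  have hka : k * a = 3 / 2 := by rw [hk]; field_simp
  have hw_pos : ∀ y ∈ Icc y₂ y₁, 0 < cos (k * (y - m)) := fun y hy =>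
    cos_mul_sub_pos (r := a) (by positivity) (by linarith [pi_gt_three])
      (abs_le.mpr ⟨by linarith [hy.1], by linarith [hy.2]⟩)
  refine eq_zero_of_dirichlet_of_pos_supersolution hu hu'
    (fun y _ => (hasDerivAt_cos_mul_sub k m y).hasDerivWithinAt)
    (fun y _ => (hasDerivAt_neg_mul_sin_mul_sub k m y).hasDerivWithinAt) hode ?_ hw_pos hb2 hb1
  intro y hy
  linarith [mul_neg_of_neg_of_pos (sub_neg.mpr (two_div_sq_mul_sech_sq_lt ha ((y - b) / a)))
    (hw_pos y hy)]

/-- Triviality of the rotationally invariant Dirichlet Jacobi kernel on short catenoidal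
annuli: if `y₁ − y₂ ≤ 2a` and `u` solves `u'' + (2/a²)·sech²((y − b)/a)·u = 0` on
`[y₂, y₁]` with `u(y₁) = u(y₂) = 0`, then `u ≡ 0` on `[y₂, y₁]`. -/
theorem catenoid_dirichlet_kernel_trivial (a b y₁ y₂ : ℝ) (ha : 0 < a)
    (hy : y₂ < y₁) (hgap : y₁ - y₂ ≤ 2 * a)
    (u u' u'' : ℝ → ℝ)
    (hu : ∀ y ∈ Set.Icc y₂ y₁, HasDerivWithinAt u (u' y) (Set.Icc y₂ y₁) y)
    (hu' : ∀ y ∈ Set.Icc y₂ y₁, HasDerivWithinAt u' (u'' y) (Set.Icc y₂ y₁) y)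
    (hode : ∀ y ∈ Set.Icc y₂ y₁,
      u'' y + (2 / a ^ 2) * (1 / Real.cosh ((y - b) / a)) ^ 2 * u y = 0)
    (hb1 : u y₁ = 0) (hb2 : u y₂ = 0) :
    ∀ y ∈ Set.Icc y₂ y₁, u y = 0 :=
  catenoid_dirichlet_kernel_trivial_general a b y₁ y₂ ha hgap u u' u'' hu hu' hode hb1 hb2
end

section
/- Define F : (0, π) → ℝ by F(t) = sgn(t − π/2) · sin(t) · arcosh(1/sin t) (so F(π/2) = 0). Then F is differentiable at t = π/2 and F'(π/2) = 1; in particular F'(π/2) > 0. -/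
open Real Filter Topology

/-
On `(0, π)` the signed function is `sin t · log tan (t / 2)`, written with
`tan (t / 2) = (1 - cos t) / sin t`: the sign `sgn (t - π/2)` exactly flips
`arcosh (1 / sin t) = log ((1 + |cos t|) / sin t)` to `log ((1 - cos t) / sin t)`, because
`(1 + cos t) (1 - cos t) = sin² t`. Since `(log tan (t / 2))' = 1 / sin t`, the product rule gives
the derivative `cos t · log tan (t / 2) + 1`, which equals `1` at `π / 2`.
-/

lemma arcosh_one_div_sin {t : ℝ} (hs : 0 < sin t) :
    _root_.arcosh (1 / sin t) = log ((1 + |cos t|) / sin t) := by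
  have hsq : (1 / sin t) ^ 2 - 1 = (cos t / sin t) ^ 2 := by
    field_simp
    linarith [sin_sq_add_cos_sq t]
  rw [_root_.arcosh, hsq, sqrt_sq_eq_abs, abs_div, abs_of_pos hs, add_div]

lemma one_sub_cos_div_sin_eq_inv {t : ℝ} (hs : sin t ≠ 0) :
    (1 - cos t) / sin t = ((1 + cos t) / sin t)⁻¹ := by
  have hc : 1 + cos t ≠ 0 := by
    intro h
    apply hs
    nlinarith [sin_sq_add_cos_sq t]
  rw [inv_div, div_eq_div_iff hs hc]
  linear_combination (-1 : ℝ) * sin_sq_add_cos_sq t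

lemma sign_mul_arcosh_one_div_sin {t : ℝ} (ht : t ∈ Set.Ioo 0 π) :
    Real.sign (t - π / 2) * _root_.arcosh (1 / sin t) = log ((1 - cos t) / sin t) := by
  have hs : 0 < sin t := sin_pos_of_pos_of_lt_pi ht.1 ht.2
  rw [arcosh_one_div_sin hs]
  rcases lt_trichotomy t (π / 2) with hlt | rfl | hgt
  · have hc : 0 < cos t := cos_pos_of_mem_Ioo ⟨by linarith [ht.1], hlt⟩
    rw [Real.sign_of_neg (by linarith), abs_of_pos hc, one_sub_cos_div_sin_eq_inv hs.ne',
      log_inv, neg_one_mul]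
  · simp
  · have hc : cos t < 0 := cos_neg_of_pi_div_two_lt_of_lt hgt (by linarith [ht.2])
    rw [Real.sign_of_pos (by linarith), abs_of_neg hc, one_mul, sub_eq_add_neg]

lemma hasDerivAt_log_one_sub_cos_div_sin {t : ℝ} (hs : sin t ≠ 0) :
    HasDerivAt (fun t => log ((1 - cos t) / sin t)) (1 / sin t) t := by
  have hc : 1 - cos t ≠ 0 := by
    intro h
    apply hs
    nlinarith [sin_sq_add_cos_sq t]
  have hquot := ((hasDerivAt_cos t).const_sub 1).div (hasDerivAt_sin t) hs
  refine (hquot.log (div_ne_zero hc hs)).congr_deriv ?_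
  simp only [Pi.div_apply]
  field_simp
  linear_combination sin_sq_add_cos_sq t

lemma hasDerivAt_sin_mul_log_one_sub_cos_div_sin {t : ℝ} (hs : sin t ≠ 0) :
    HasDerivAt (fun t => sin t * log ((1 - cos t) / sin t))
      (cos t * log ((1 - cos t) / sin t) + 1) t := by
  refine ((hasDerivAt_sin t).mul (hasDerivAt_log_one_sub_cos_div_sin hs)).congr_deriv ?_
  field_simp

/-- The function `F(t) = sgn(t − π/2)·sin t·arcosh(1/sin t)` is differentiable at
`t = π/2` with `F'(π/2) = 1 > 0`. -/
theorem sign_sin_arcosh_hasDerivAt :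
    HasDerivAt
        (fun t : ℝ => Real.sign (t - π / 2) * Real.sin t * _root_.arcosh (1 / Real.sin t))
        1 (π / 2) ∧
      0 < deriv
        (fun t : ℝ => Real.sign (t - π / 2) * Real.sin t * _root_.arcosh (1 / Real.sin t))
        (π / 2) := by
  have hG : HasDerivAt (fun t => sin t * log ((1 - cos t) / sin t)) 1 (π / 2) := by
    simpa using hasDerivAt_sin_mul_log_one_sub_cos_div_sin (t := π / 2) (by simp)
  have hEq : (fun t => Real.sign (t - π / 2) * sin t * _root_.arcosh (1 / sin t))
      =ᶠ[𝓝 (π / 2)] fun t => sin t * log ((1 - cos t) / sin t) := by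
    filter_upwards [Ioo_mem_nhds (by positivity : (0 : ℝ) < π / 2) (by linarith [pi_pos] : π / 2 < π)] with t ht
    rw [← sign_mul_arcosh_one_div_sin ht]
    ring
  have hF := hG.congr_of_eventuallyEq hEq
  exact ⟨hF, by rw [hF.deriv]; exact one_pos⟩
end

section
/- Let a > 0, b ∈ ℝ, β₀ ∈ (0, π), and α ∈ (−π/2, π/2) with α + β₀ ∈ (0, π). Let J ⊆ (0, π) be an open interval containing β₀ and r : J → (0, ∞) a differentiable function satisfying a·cosh((r(β)·cos β − b)/a) = r(β)·sin β for all β ∈ J, with r(β₀) = 1 and sinh((cos β₀ − b)/a) = −cot(α + β₀). Then r'(β₀) = −tan α; equivalently, the function v := −r'/r satisfies v(β₀) = tan α. -/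
/-!
Differentiate the catenary relation `a·cosh((y − b)/a) = x` along the polar curve
`x = r sin β`, `y = r cos β` at `β₀`: with `r(β₀) = 1` this gives
`sinh((cos β₀ − b)/a)·(r' cos β₀ − sin β₀) = r' sin β₀ + cos β₀`. Substituting
`sinh = −cot(α + β₀)` and clearing `sin(α + β₀)`, the angle subtraction formulas for
`α = (α + β₀) − β₀` collapse this to `r' cos α + sin α = 0`.
-/

open Real Filter Topology

theorem sinh_mul_deriv_eq_deriv_of_catenary {a b t y' x' : ℝ} {x y : ℝ → ℝ} (ha : a ≠ 0)
    (hy : HasDerivAt y y' t) (hx : HasDerivAt x x' t)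
    (hcat : ∀ᶠ s in 𝓝 t, a * cosh ((y s - b) / a) = x s) :
    sinh ((y t - b) / a) * y' = x' := by
  have hlhs : HasDerivAt (fun s => a * cosh ((y s - b) / a))
      (a * (sinh ((y t - b) / a) * (y' / a))) t :=
    ((hy.sub_const b).div_const a).cosh.const_mul a
  have hrhs : HasDerivAt (fun s => a * cosh ((y s - b) / a)) x' t :=
    hx.congr_of_eventuallyEq hcat
  rw [← hlhs.unique hrhs]
  field_simp

theorem mul_cos_add_sin_eq_zero_of_neg_cot_mul {p α β : ℝ} (hs : sin (α + β) ≠ 0)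
    (h : -cot (α + β) * (p * cos β - sin β) = p * sin β + cos β) :
    p * cos α + sin α = 0 := by
  rw [cot_eq_cos_div_sin] at h
  field_simp at h
  have hcos : cos α = cos (α + β) * cos β + sin (α + β) * sin β := by
    rw [← cos_sub, add_sub_cancel_right]
  have hsin : sin α = sin (α + β) * cos β - cos (α + β) * sin β := by
    rw [← sin_sub, add_sub_cancel_right]
  rw [hcos, hsin]
  linear_combination -h

theorem eq_neg_tan_of_mul_cos_add_sin_eq_zero {p α : ℝ} (h : p * cos α + sin α = 0) :
    p = -tan α := by
  have hcos : cos α ≠ 0 := by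
    intro hc
    have hsin : sin α = 0 := by simpa [hc] using h
    simpa [hc, hsin] using sin_sq_add_cos_sq α
  rw [tan_eq_sin_div_cos]
  field_simp
  linear_combination h

theorem radial_graph_boundary_slope_general (a b β₀ α : ℝ) (ha : 0 < a)
    (hαβ : α + β₀ ∈ Set.Ioo 0 π)
    (J : Set ℝ) (hJ : ∃ c d : ℝ, J = Set.Ioo c d)
    (hβ₀J : β₀ ∈ J)
    (r r' : ℝ → ℝ)
    (hr : ∀ β ∈ J, HasDerivAt r (r' β) β)
    (hcat : ∀ β ∈ J, a * Real.cosh ((r β * Real.cos β - b) / a) = r β * Real.sin β)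
    (hr0 : r β₀ = 1)
    (hangle : Real.sinh ((Real.cos β₀ - b) / a) = -Real.cot (α + β₀)) :
    r' β₀ = -Real.tan α := by
  obtain ⟨c, d, rfl⟩ := hJ
  have hcat_near : ∀ᶠ β in 𝓝 β₀, a * cosh ((r β * cos β - b) / a) = r β * sin β :=
    eventually_of_mem (isOpen_Ioo.mem_nhds hβ₀J) hcat
  have hslope := sinh_mul_deriv_eq_deriv_of_catenary ha.ne'
    ((hr β₀ hβ₀J).mul (hasDerivAt_cos β₀)) ((hr β₀ hβ₀J).mul (hasDerivAt_sin β₀)) hcat_near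
  simp only [Pi.mul_apply, hr0, one_mul, mul_neg, ← sub_eq_add_neg, hangle] at hslope
  exact eq_neg_tan_of_mul_cos_add_sin_eq_zero <|
    mul_cos_add_sin_eq_zero_of_neg_cot_mul (sin_pos_of_pos_of_lt_pi hαβ.1 hαβ.2).ne' hslope

/-- Boundary condition `v(β₀) = tan α` of Lemma 2.6(iii): if the radial graph
`β ↦ r(β)·(sin β, cos β)` parametrizes the catenary `x = a·cosh((y − b)/a)` near `β₀`,
with `r(β₀) = 1` and `sinh((cos β₀ − b)/a) = −cot(α + β₀)`, then `r'(β₀) = −tan α`. -/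
theorem radial_graph_boundary_slope (a b β₀ α : ℝ) (ha : 0 < a)
    (hβ₀ : β₀ ∈ Set.Ioo 0 π) (hα : α ∈ Set.Ioo (-(π / 2)) (π / 2))
    (hαβ : α + β₀ ∈ Set.Ioo 0 π)
    (J : Set ℝ) (hJ : ∃ c d : ℝ, J = Set.Ioo c d) (hJsub : J ⊆ Set.Ioo 0 π)
    (hβ₀J : β₀ ∈ J)
    (r r' : ℝ → ℝ)
    (hrpos : ∀ β ∈ J, 0 < r β)
    (hr : ∀ β ∈ J, HasDerivAt r (r' β) β)
    (hcat : ∀ β ∈ J, a * Real.cosh ((r β * Real.cos β - b) / a) = r β * Real.sin β)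
    (hr0 : r β₀ = 1)
    (hangle : Real.sinh ((Real.cos β₀ - b) / a) = -Real.cot (α + β₀)) :
    r' β₀ = -Real.tan α :=
  radial_graph_boundary_slope_general a b β₀ α ha hαβ J hJ hβ₀J r r' hr hcat hr0 hangle
end
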